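/- arXiv:1501.02302 — 11 statements merged into one kernel-verified Lean document; each statement's English description precedes it below -/
import Mathlib

section
/- Let G be a Hausdorff étale groupoid and let Iso(G)° denote the interior of the isotropy subgroupoid. For every γ ∈ G, conjugation α ↦ γαγ^{-1} maps Iso(G)°_{s(γ)} bijectively onto Iso(G)°_{r(γ)}. In particular, for each unit x, Iso(G)°_x is a normal subgroup of the isotropy group G^x_x. -/
/-- A topological groupoid. -/
structure TopologicalGroupoid (G : Type*) [TopologicalSpace G] where
  src : G → G
  rng : G → G
  inv : G → G
  mul : (a b : G) → src a = rng b → G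
  continuous_src : Continuous src
  continuous_rng : Continuous rng
  continuous_inv : Continuous inv
  continuous_mul : Continuous fun p : {p : G × G // src p.1 = rng p.2} => mul p.1.1 p.1.2 p.2
  rng_mul : ∀ a b h, rng (mul a b h) = rng a
  src_mul : ∀ a b h, src (mul a b h) = src b
  src_inv : ∀ a, src (inv a) = rng a
  rng_inv : ∀ a, rng (inv a) = src a
  inv_inv : ∀ a, inv (inv a) = a
  src_rng : ∀ a, src (rng a) = rng a
  rng_rng : ∀ a, rng (rng a) = rng a
  src_src : ∀ a, src (src a) = src a
  rng_src : ∀ a, rng (src a) = src a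
  mul_assoc : ∀ a b c (hab : src a = rng b) (hbc : src b = rng c)
      (h1 : src (mul a b hab) = rng c) (h2 : src a = rng (mul b c hbc)),
      mul (mul a b hab) c h1 = mul a (mul b c hbc) h2
  mul_src : ∀ a (h : src a = rng (src a)), mul a (src a) h = a
  rng_mul_self : ∀ a (h : src (rng a) = rng a), mul (rng a) a h = a
  inv_mul : ∀ a (h : src (inv a) = rng a), mul (inv a) a h = src a
  mul_inv : ∀ a (h : src a = rng (inv a)), mul a (inv a) h = rng a

/-- The isotropy subgroupoid `Iso(G) = {γ : r γ = s γ}`. -/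
def TopologicalGroupoid.Iso {G : Type*} [TopologicalSpace G]
    (𝒢 : TopologicalGroupoid G) : Set G :=
  {γ | 𝒢.rng γ = 𝒢.src γ}

/-- Conjugation `α ↦ γ α γ⁻¹` of an element `α` with `s α = r α = s γ`. -/
def TopologicalGroupoid.conj {G : Type*} [TopologicalSpace G]
    (𝒢 : TopologicalGroupoid G) (γ α : G)
    (h1 : 𝒢.src γ = 𝒢.rng α) (h2 : 𝒢.src α = 𝒢.src γ) : G :=
  𝒢.mul (𝒢.mul γ α h1) (𝒢.inv γ) (by rw [𝒢.src_mul, 𝒢.rng_inv]; exact h2)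

namespace TopologicalGroupoid
variable {G : Type*} [TopologicalSpace G] (𝒢 : TopologicalGroupoid G)

lemma mul_congr {a a' b b' : G} (ha : a = a') (hb : b = b')
    (h : 𝒢.src a = 𝒢.rng b) (h' : 𝒢.src a' = 𝒢.rng b') :
    𝒢.mul a b h = 𝒢.mul a' b' h' := by subst ha; subst hb; rfl

lemma inv_mul_mul (a b : G) (h : 𝒢.src a = 𝒢.rng b)
    (hh : 𝒢.src (𝒢.inv a) = 𝒢.rng (𝒢.mul a b h)) :
    𝒢.mul (𝒢.inv a) (𝒢.mul a b h) hh = b := by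
  have hab : 𝒢.src (𝒢.inv a) = 𝒢.rng a := 𝒢.src_inv a
  have h1 : 𝒢.src (𝒢.mul (𝒢.inv a) a hab) = 𝒢.rng b := by rw [𝒢.src_mul]; exact h
  rw [← 𝒢.mul_assoc (𝒢.inv a) a b hab h h1 hh]
  calc 𝒢.mul (𝒢.mul (𝒢.inv a) a hab) b h1
      = 𝒢.mul (𝒢.rng b) b (by rw [𝒢.src_rng]) :=
        𝒢.mul_congr (by rw [𝒢.inv_mul a hab]; exact h) rfl _ _
    _ = b := 𝒢.rng_mul_self b _

lemma mul_mul_inv (b a : G) (h : 𝒢.src b = 𝒢.rng a)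
    (hh : 𝒢.src (𝒢.mul b a h) = 𝒢.rng (𝒢.inv a)) :
    𝒢.mul (𝒢.mul b a h) (𝒢.inv a) hh = b := by
  have hbc : 𝒢.src a = 𝒢.rng (𝒢.inv a) := (𝒢.rng_inv a).symm
  have h2 : 𝒢.src b = 𝒢.rng (𝒢.mul a (𝒢.inv a) hbc) := by rw [𝒢.rng_mul]; exact h
  rw [𝒢.mul_assoc b a (𝒢.inv a) h hbc hh h2]
  calc 𝒢.mul b (𝒢.mul a (𝒢.inv a) hbc) h2
      = 𝒢.mul b (𝒢.src b) (𝒢.rng_src b).symm := by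
        refine 𝒢.mul_congr rfl ?_ _ _
        rw [𝒢.mul_inv a hbc]; exact h.symm
    _ = b := 𝒢.mul_src b _

lemma mul_mul_inv' (b a : G) (h : 𝒢.src b = 𝒢.rng (𝒢.inv a))
    (hh : 𝒢.src (𝒢.mul b (𝒢.inv a) h) = 𝒢.rng a) :
    𝒢.mul (𝒢.mul b (𝒢.inv a) h) a hh = b := by
  calc 𝒢.mul (𝒢.mul b (𝒢.inv a) h) a hh
      = 𝒢.mul (𝒢.mul b (𝒢.inv a) h) (𝒢.inv (𝒢.inv a))
          (by rw [𝒢.rng_inv, 𝒢.src_inv]; exact hh) :=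
        𝒢.mul_congr rfl (𝒢.inv_inv a).symm _ _
    _ = b := 𝒢.mul_mul_inv b (𝒢.inv a) h _

lemma src_conj (γ α : G) (h1 : 𝒢.src γ = 𝒢.rng α) (h2 : 𝒢.src α = 𝒢.src γ) :
    𝒢.src (𝒢.conj γ α h1 h2) = 𝒢.rng γ := by
  unfold conj; rw [𝒢.src_mul, 𝒢.src_inv]

lemma rng_conj (γ α : G) (h1 : 𝒢.src γ = 𝒢.rng α) (h2 : 𝒢.src α = 𝒢.src γ) :
    𝒢.rng (𝒢.conj γ α h1 h2) = 𝒢.rng γ := by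
  unfold conj; rw [𝒢.rng_mul, 𝒢.rng_mul]

/-- raw form of `γ⁻¹ (γ α γ⁻¹) γ = α`. -/
lemma inv_conj_raw (γ α : G) (h1 : 𝒢.src γ = 𝒢.rng α) (h2 : 𝒢.src α = 𝒢.src γ)
    (p : 𝒢.src (𝒢.inv γ) = 𝒢.rng (𝒢.conj γ α h1 h2))
    (q : 𝒢.src (𝒢.mul (𝒢.inv γ) (𝒢.conj γ α h1 h2) p) = 𝒢.rng γ) :
    𝒢.mul (𝒢.mul (𝒢.inv γ) (𝒢.conj γ α h1 h2) p) γ q = α := by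
  unfold conj at p q ⊢
  have hab : 𝒢.src (𝒢.inv γ) = 𝒢.rng (𝒢.mul γ α h1) := by rw [𝒢.src_inv, 𝒢.rng_mul]
  have hbc : 𝒢.src (𝒢.mul γ α h1) = 𝒢.rng (𝒢.inv γ) := by rw [𝒢.src_mul, 𝒢.rng_inv]; exact h2
  have h1' : 𝒢.src (𝒢.mul (𝒢.inv γ) (𝒢.mul γ α h1) hab) = 𝒢.rng (𝒢.inv γ) := by
    rw [𝒢.src_mul]; exact hbc
  have key : 𝒢.mul (𝒢.inv γ) (𝒢.mul (𝒢.mul γ α h1) (𝒢.inv γ) hbc) p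
      = 𝒢.mul (𝒢.mul (𝒢.inv γ) (𝒢.mul γ α h1) hab) (𝒢.inv γ) h1' :=
    (𝒢.mul_assoc (𝒢.inv γ) (𝒢.mul γ α h1) (𝒢.inv γ) hab hbc h1' p).symm
  have key2 : 𝒢.mul (𝒢.mul (𝒢.inv γ) (𝒢.mul γ α h1) hab) (𝒢.inv γ) h1'
      = 𝒢.mul α (𝒢.inv γ) (by rw [𝒢.rng_inv]; exact h2) :=
    𝒢.mul_congr (𝒢.inv_mul_mul γ α h1 hab) rfl _ _
  calc 𝒢.mul (𝒢.mul (𝒢.inv γ) (𝒢.mul (𝒢.mul γ α h1) (𝒢.inv γ) hbc) p) γ q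
      = 𝒢.mul (𝒢.mul α (𝒢.inv γ) (by rw [𝒢.rng_inv]; exact h2)) γ
          (by rw [𝒢.src_mul, 𝒢.src_inv]) :=
        𝒢.mul_congr (key.trans key2) rfl _ _
    _ = α := 𝒢.mul_mul_inv' α γ _ _

lemma conj_inv_conj (γ α : G) (h1 : 𝒢.src γ = 𝒢.rng α) (h2 : 𝒢.src α = 𝒢.src γ)
    (h1' : 𝒢.src (𝒢.inv γ) = 𝒢.rng (𝒢.conj γ α h1 h2))
    (h2' : 𝒢.src (𝒢.conj γ α h1 h2) = 𝒢.src (𝒢.inv γ)) :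
    𝒢.conj (𝒢.inv γ) (𝒢.conj γ α h1 h2) h1' h2' = α := by
  show 𝒢.mul (𝒢.mul (𝒢.inv γ) (𝒢.conj γ α h1 h2) h1') (𝒢.inv (𝒢.inv γ)) _ = α
  calc 𝒢.mul (𝒢.mul (𝒢.inv γ) (𝒢.conj γ α h1 h2) h1') (𝒢.inv (𝒢.inv γ)) _
      = 𝒢.mul (𝒢.mul (𝒢.inv γ) (𝒢.conj γ α h1 h2) h1') γ
          (by rw [𝒢.src_mul, 𝒢.src_conj]) :=
        𝒢.mul_congr rfl (𝒢.inv_inv γ) _ _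
    _ = α := 𝒢.inv_conj_raw γ α h1 h2 h1' _

end TopologicalGroupoid

namespace TopologicalGroupoid
variable {G : Type*} [TopologicalSpace G] (𝒢 : TopologicalGroupoid G)

lemma mul_inv_mul (a b : G) (h : 𝒢.src (𝒢.inv a) = 𝒢.rng b)
    (hh : 𝒢.src a = 𝒢.rng (𝒢.mul (𝒢.inv a) b h)) :
    𝒢.mul a (𝒢.mul (𝒢.inv a) b h) hh = b := by
  calc 𝒢.mul a (𝒢.mul (𝒢.inv a) b h) hh
      = 𝒢.mul (𝒢.inv (𝒢.inv a)) (𝒢.mul (𝒢.inv a) b h)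
          (by rw [𝒢.src_inv, 𝒢.rng_inv, 𝒢.rng_mul, 𝒢.rng_inv]) :=
        𝒢.mul_congr (𝒢.inv_inv a).symm rfl _ _
    _ = b := 𝒢.inv_mul_mul (𝒢.inv a) b h _

lemma conj_conj_inv (γ β : G) (h1 : 𝒢.src (𝒢.inv γ) = 𝒢.rng β)
    (h2 : 𝒢.src β = 𝒢.src (𝒢.inv γ))
    (h1' : 𝒢.src γ = 𝒢.rng (𝒢.conj (𝒢.inv γ) β h1 h2))
    (h2' : 𝒢.src (𝒢.conj (𝒢.inv γ) β h1 h2) = 𝒢.src γ) :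
    𝒢.conj γ (𝒢.conj (𝒢.inv γ) β h1 h2) h1' h2' = β := by
  set δ := 𝒢.conj (𝒢.inv γ) β h1 h2 with hδ
  have stepA : δ = 𝒢.mul (𝒢.mul (𝒢.inv γ) β h1) γ
      (by rw [𝒢.src_mul]; exact h2.trans (𝒢.src_inv γ)) := by
    rw [hδ]; unfold conj
    exact 𝒢.mul_congr rfl (𝒢.inv_inv γ) _ _
  have q : 𝒢.src γ = 𝒢.rng (𝒢.mul (𝒢.inv γ) β h1) := by
    rw [𝒢.rng_mul, 𝒢.rng_inv]
  have q' : 𝒢.src (𝒢.mul γ (𝒢.mul (𝒢.inv γ) β h1) q) = 𝒢.rng γ := by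
    rw [𝒢.src_mul, 𝒢.src_mul]
    exact h2.trans (𝒢.src_inv γ)
  have step1 : 𝒢.mul γ δ h1' = 𝒢.mul β γ (by rw [𝒢.src_inv] at h2; exact h2) := by
    calc 𝒢.mul γ δ h1'
        = 𝒢.mul γ (𝒢.mul (𝒢.mul (𝒢.inv γ) β h1) γ _)
            (by rw [𝒢.rng_mul, 𝒢.rng_mul, 𝒢.rng_inv]) := 𝒢.mul_congr rfl stepA _ _
      _ = 𝒢.mul (𝒢.mul γ (𝒢.mul (𝒢.inv γ) β h1) q) γ q' :=
          (𝒢.mul_assoc γ (𝒢.mul (𝒢.inv γ) β h1) γ q _ q' _).symm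
      _ = 𝒢.mul β γ _ := 𝒢.mul_congr (𝒢.mul_inv_mul γ β h1 q) rfl _ _
  show 𝒢.mul (𝒢.mul γ δ h1') (𝒢.inv γ) _ = β
  calc 𝒢.mul (𝒢.mul γ δ h1') (𝒢.inv γ) _
      = 𝒢.mul (𝒢.mul β γ (by rw [𝒢.src_inv] at h2; exact h2)) (𝒢.inv γ)
          (by rw [𝒢.src_mul, 𝒢.rng_inv]) := 𝒢.mul_congr step1 rfl _ _
    _ = β := 𝒢.mul_mul_inv β γ _ _

lemma continuous_mul₂ {X : Type*} [TopologicalSpace X] {f g : X → G}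
    (hf : Continuous f) (hg : Continuous g) (h : ∀ x, 𝒢.src (f x) = 𝒢.rng (g x)) :
    Continuous fun x => 𝒢.mul (f x) (g x) (h x) :=
  𝒢.continuous_mul.comp (Continuous.subtype_mk (hf.prodMk hg) h)

end TopologicalGroupoid

namespace TopologicalGroupoid
variable {G : Type*} [TopologicalSpace G] {𝒢 : TopologicalGroupoid G}

lemma conj_mem_interior (hetale : IsLocalHomeomorph 𝒢.rng)
    (γ α : G) (h1 : 𝒢.src γ = 𝒢.rng α) (h2 : 𝒢.src α = 𝒢.src γ)
    (hα : α ∈ interior 𝒢.Iso) :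
    𝒢.conj γ α h1 h2 ∈ interior 𝒢.Iso := by
  classical
  -- `src` is a local homeomorphism as well
  have hinvhom : IsLocalHomeomorph 𝒢.inv :=
    (Homeomorph.mk ⟨𝒢.inv, 𝒢.inv, 𝒢.inv_inv, 𝒢.inv_inv⟩
      𝒢.continuous_inv 𝒢.continuous_inv).isLocalHomeomorph
  have hsrcloc : IsLocalHomeomorph 𝒢.src := by
    have h : 𝒢.src = 𝒢.rng ∘ 𝒢.inv := funext fun a => (𝒢.rng_inv a).symm
    rw [h]; exact hetale.comp hinvhom
  obtain ⟨e, hγe, hrng⟩ := hetale γ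
  obtain ⟨f, hγf, hsrc⟩ := hsrcloc γ
  set U : Set G := e.source ∩ f.source with hU
  have hUopen : IsOpen U := e.open_source.inter f.open_source
  set e' := e.restr U with he'
  have hes : e'.source = U := by
    rw [he', e.restr_source' U hUopen]
    exact Set.inter_eq_self_of_subset_right Set.inter_subset_left
  have hrng' : ∀ y, 𝒢.rng y = e' y := fun y => by rw [hrng]; rfl
  have key : ∀ z ∈ e'.target, e'.symm z ∈ U ∧ 𝒢.rng (e'.symm z) = z := by
    intro z hz
    exact ⟨hes ▸ e'.map_target hz, by rw [hrng' (e'.symm z)]; exact e'.right_inv hz⟩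
  set O : Set G := 𝒢.rng ⁻¹' e'.target ∩ 𝒢.src ⁻¹' e'.target with hO
  have hOopen : IsOpen O :=
    (e'.open_target.preimage 𝒢.continuous_rng).inter
      (e'.open_target.preimage 𝒢.continuous_src)
  have comp1 : ∀ d : O, 𝒢.src (𝒢.inv (e'.symm (𝒢.rng (d : G)))) = 𝒢.rng (d : G) :=
    fun d => by rw [𝒢.src_inv]; exact (key _ d.2.1).2
  have comp2 : ∀ d : O,
      𝒢.src (𝒢.mul (𝒢.inv (e'.symm (𝒢.rng (d : G)))) (d : G) (comp1 d))
        = 𝒢.rng (e'.symm (𝒢.src (d : G))) := fun d => by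
    rw [𝒢.src_mul]; exact ((key _ d.2.2).2).symm
  set Φ : O → G := fun d =>
    𝒢.mul (𝒢.mul (𝒢.inv (e'.symm (𝒢.rng (d : G)))) (d : G) (comp1 d))
      (e'.symm (𝒢.src (d : G))) (comp2 d) with hΦdef
  have hσr : Continuous fun d : O => e'.symm (𝒢.rng (d : G)) :=
    e'.continuousOn_symm.comp_continuous
      (𝒢.continuous_rng.comp continuous_subtype_val) (fun d => d.2.1)
  have hσs : Continuous fun d : O => e'.symm (𝒢.src (d : G)) :=
    e'.continuousOn_symm.comp_continuous
      (𝒢.continuous_src.comp continuous_subtype_val) (fun d => d.2.2)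
  have hΦ : Continuous Φ :=
    𝒢.continuous_mul₂
      (𝒢.continuous_mul₂ (𝒢.continuous_inv.comp hσr) continuous_subtype_val comp1)
      hσs comp2
  set W' : Set O := Φ ⁻¹' (interior 𝒢.Iso) with hW'
  have hW'open : IsOpen W' := hΦ.isOpen_preimage _ isOpen_interior
  set W : Set G := Subtype.val '' W' with hWdef
  have hWopen : IsOpen W := hOopen.isOpenMap_subtype_val W' hW'open
  -- W is contained in the isotropy set
  have hWiso : W ⊆ 𝒢.Iso := by
    rintro δ ⟨d, hd, rfl⟩
    have hΦmem : Φ d ∈ 𝒢.Iso := interior_subset hd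
    have hΦiso : 𝒢.rng (Φ d) = 𝒢.src (Φ d) := hΦmem
    have hr : 𝒢.rng (Φ d) = 𝒢.src (e'.symm (𝒢.rng (d : G))) := by
      rw [hΦdef]; rw [𝒢.rng_mul, 𝒢.rng_mul, 𝒢.rng_inv]
    have hs : 𝒢.src (Φ d) = 𝒢.src (e'.symm (𝒢.src (d : G))) := by
      rw [hΦdef]; rw [𝒢.src_mul]
    have h1m := key _ d.2.1
    have h2m := key _ d.2.2
    have hseq : 𝒢.src (e'.symm (𝒢.rng (d : G))) = 𝒢.src (e'.symm (𝒢.src (d : G))) := by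
      rw [← hr, ← hs]; exact hΦiso
    have hsame : e'.symm (𝒢.rng (d : G)) = e'.symm (𝒢.src (d : G)) := by
      refine f.injOn h1m.1.2 h2m.1.2 ?_
      have e1 : f (e'.symm (𝒢.rng (d : G))) = 𝒢.src (e'.symm (𝒢.rng (d : G))) :=
        (congrFun hsrc _).symm
      have e2 : f (e'.symm (𝒢.src (d : G))) = 𝒢.src (e'.symm (𝒢.src (d : G))) :=
        (congrFun hsrc _).symm
      rw [e1, e2, hseq]
    show 𝒢.rng (d : G) = 𝒢.src (d : G)
    rw [← h1m.2, hsame, h2m.2]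
  -- the conjugate lies in W
  have hγU : γ ∈ U := ⟨hγe, hγf⟩
  have hγe' : γ ∈ e'.source := hes ▸ hγU
  have hrt : 𝒢.rng γ ∈ e'.target := by rw [hrng' γ]; exact e'.map_source hγe'
  have hσγ : e'.symm (𝒢.rng γ) = γ := by rw [hrng' γ]; exact e'.left_inv hγe'
  set δ₀ := 𝒢.conj γ α h1 h2 with hδ₀
  have hδ₀O : δ₀ ∈ O := by
    constructor
    · show 𝒢.rng δ₀ ∈ e'.target
      rw [hδ₀, 𝒢.rng_conj]; exact hrt
    · show 𝒢.src δ₀ ∈ e'.target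
      rw [hδ₀, 𝒢.src_conj]; exact hrt
  have hp : 𝒢.src (𝒢.inv γ) = 𝒢.rng δ₀ := by rw [𝒢.src_inv, hδ₀, 𝒢.rng_conj]
  have hq : 𝒢.src (𝒢.mul (𝒢.inv γ) δ₀ hp) = 𝒢.rng γ := by
    rw [𝒢.src_mul, hδ₀, 𝒢.src_conj]
  have hΦval : Φ ⟨δ₀, hδ₀O⟩ = α := by
    have step : Φ ⟨δ₀, hδ₀O⟩ = 𝒢.mul (𝒢.mul (𝒢.inv γ) δ₀ hp) γ hq := by
      rw [hΦdef]
      refine 𝒢.mul_congr (𝒢.mul_congr (congrArg 𝒢.inv ?_) rfl _ _) ?_ _ _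
      · show e'.symm (𝒢.rng δ₀) = γ
        rw [hδ₀, 𝒢.rng_conj]; exact hσγ
      · show e'.symm (𝒢.src δ₀) = γ
        rw [hδ₀, 𝒢.src_conj]; exact hσγ
    rw [step]
    exact 𝒢.inv_conj_raw γ α h1 h2 _ _
  have hmem : (⟨δ₀, hδ₀O⟩ : O) ∈ W' := by
    show Φ ⟨δ₀, hδ₀O⟩ ∈ interior 𝒢.Iso
    rw [hΦval]; exact hα
  exact interior_maximal hWiso hWopen ⟨⟨δ₀, hδ₀O⟩, hmem, rfl⟩

end TopologicalGroupoid

namespace TopologicalGroupoid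
variable {G : Type*} [TopologicalSpace G] (𝒢 : TopologicalGroupoid G)

lemma conj_congr {γ γ' a a' : G} (hγ : γ = γ') (ha : a = a')
    (h1 : 𝒢.src γ = 𝒢.rng a) (h2 : 𝒢.src a = 𝒢.src γ)
    (h1' : 𝒢.src γ' = 𝒢.rng a') (h2' : 𝒢.src a' = 𝒢.src γ') :
    𝒢.conj γ a h1 h2 = 𝒢.conj γ' a' h1' h2' := by subst hγ; subst ha; rfl

end TopologicalGroupoid


/-- In a Hausdorff étale groupoid, conjugation by `γ` maps `Iso(G)°_{s γ}` bijectively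
onto `Iso(G)°_{r γ}`; in particular for each unit `x`, `Iso(G)°_x` is a normal subgroup
of `G^x_x`. -/
theorem conj_interior_iso_bijective {G : Type*} [TopologicalSpace G] [T2Space G]
    (𝒢 : TopologicalGroupoid G) (hetale : IsLocalHomeomorph 𝒢.rng) :
    -- conjugation maps `Iso°_{s γ}` into `Iso°_{r γ}` ...
    (∀ γ α (h1 : 𝒢.src γ = 𝒢.rng α) (h2 : 𝒢.src α = 𝒢.src γ), α ∈ interior 𝒢.Iso →
      𝒢.conj γ α h1 h2 ∈ interior 𝒢.Iso ∧ 𝒢.src (𝒢.conj γ α h1 h2) = 𝒢.rng γ) ∧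
    -- ... injectively ...
    (∀ γ α β (h1 : 𝒢.src γ = 𝒢.rng α) (h2 : 𝒢.src α = 𝒢.src γ)
      (h1' : 𝒢.src γ = 𝒢.rng β) (h2' : 𝒢.src β = 𝒢.src γ),
      α ∈ interior 𝒢.Iso → β ∈ interior 𝒢.Iso →
      𝒢.conj γ α h1 h2 = 𝒢.conj γ β h1' h2' → α = β) ∧
    -- ... and surjectively onto `Iso°_{r γ}`;
    (∀ γ β, β ∈ interior 𝒢.Iso → 𝒢.src β = 𝒢.rng γ →
      ∃ α, ∃ h1 : 𝒢.src γ = 𝒢.rng α, ∃ h2 : 𝒢.src α = 𝒢.src γ, α ∈ interior 𝒢.Iso ∧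
        𝒢.conj γ α h1 h2 = β) ∧
    -- in particular `Iso°_x` is normal in `G^x_x`.
    (∀ x : G, 𝒢.rng x = x → ∀ γ, 𝒢.src γ = x → 𝒢.rng γ = x →
      ∀ α (h1 : 𝒢.src γ = 𝒢.rng α) (h2 : 𝒢.src α = 𝒢.src γ), α ∈ interior 𝒢.Iso →
        𝒢.conj γ α h1 h2 ∈ interior 𝒢.Iso ∧ 𝒢.src (𝒢.conj γ α h1 h2) = x) := by
  refine ⟨?_, ?_, ?_, ?_⟩
  · intro γ α h1 h2 hα
    exact ⟨TopologicalGroupoid.conj_mem_interior hetale γ α h1 h2 hα, 𝒢.src_conj γ α h1 h2⟩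
  · intro γ α β h1 h2 h1' h2' hα hβ heq
    have p : 𝒢.src (𝒢.inv γ) = 𝒢.rng (𝒢.conj γ α h1 h2) := by
      rw [𝒢.src_inv, 𝒢.rng_conj]
    have q : 𝒢.src (𝒢.conj γ α h1 h2) = 𝒢.src (𝒢.inv γ) := by
      rw [𝒢.src_conj, 𝒢.src_inv]
    have p' : 𝒢.src (𝒢.inv γ) = 𝒢.rng (𝒢.conj γ β h1' h2') := by
      rw [𝒢.src_inv, 𝒢.rng_conj]
    have q' : 𝒢.src (𝒢.conj γ β h1' h2') = 𝒢.src (𝒢.inv γ) := by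
      rw [𝒢.src_conj, 𝒢.src_inv]
    calc α = 𝒢.conj (𝒢.inv γ) (𝒢.conj γ α h1 h2) p q :=
            (𝒢.conj_inv_conj γ α h1 h2 p q).symm
      _ = 𝒢.conj (𝒢.inv γ) (𝒢.conj γ β h1' h2') p' q' := 𝒢.conj_congr rfl heq _ _ _ _
      _ = β := 𝒢.conj_inv_conj γ β h1' h2' p' q'
  · intro γ β hβ hsβ
    have hβmem : β ∈ 𝒢.Iso := interior_subset hβ
    have hβiso : 𝒢.rng β = 𝒢.src β := hβmem
    have hh1 : 𝒢.src (𝒢.inv γ) = 𝒢.rng β := by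
      rw [𝒢.src_inv, hβiso]; exact hsβ.symm
    have hh2 : 𝒢.src β = 𝒢.src (𝒢.inv γ) := by rw [𝒢.src_inv]; exact hsβ
    set α := 𝒢.conj (𝒢.inv γ) β hh1 hh2 with hα
    have hαint : α ∈ interior 𝒢.Iso :=
      TopologicalGroupoid.conj_mem_interior hetale (𝒢.inv γ) β hh1 hh2 hβ
    have h1 : 𝒢.src γ = 𝒢.rng α := by
      rw [hα, 𝒢.rng_conj, 𝒢.rng_inv]
    have h2 : 𝒢.src α = 𝒢.src γ := by
      rw [hα, 𝒢.src_conj, 𝒢.rng_inv]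
    exact ⟨α, h1, h2, hαint, 𝒢.conj_conj_inv γ β hh1 hh2 h1 h2⟩
  · intro x hx γ hsγ hrγ α h1 h2 hα
    exact ⟨TopologicalGroupoid.conj_mem_interior hetale γ α h1 h2 hα,
      (𝒢.src_conj γ α h1 h2).trans hrγ⟩
end

section
/- Let T be an action of ℕ^k by local homeomorphisms (hence open maps) on a locally compact Hausdorff space X, and suppose there exists x ∈ X whose orbit [x] = {y : T^m x = T^n y for some m,n ∈ ℕ^k} is dense in X. Then for any two nonempty open sets U, V ⊆ X there exists a nonempty open set W with Σ_U ∪ Σ_V ⊆ Σ_W. -/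
/-- If `T` is an `ℕ^k`-action by local homeomorphisms (hence continuous open maps) on a
locally compact Hausdorff space `X` with a point of dense orbit, then for any two
nonempty open `U V ⊆ X` there is a nonempty open `W` with `Σ_U ∪ Σ_V ⊆ Σ_W`. -/
theorem common_open_set {k : ℕ} {X : Type*} [TopologicalSpace X]
    [LocallyCompactSpace X] [T2Space X]
    (T : (Fin k → ℕ) → X → X) (hT0 : T 0 = id)
    (hTadd : ∀ m n, T (m + n) = T m ∘ T n)
    (hloc : ∀ m, IsLocalHomeomorph (T m))
    (hdense : ∃ x : X, Dense {y : X | ∃ m n : Fin k → ℕ, T m x = T n y})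
    (U V : Set X) (hU : IsOpen U) (hV : IsOpen V)
    (hUne : U.Nonempty) (hVne : V.Nonempty) :
    ∃ W : Set X, IsOpen W ∧ W.Nonempty ∧
      ({q : (Fin k → ℕ) × (Fin k → ℕ) | ∀ x ∈ U, T q.1 x = T q.2 x} ∪
        {q : (Fin k → ℕ) × (Fin k → ℕ) | ∀ x ∈ V, T q.1 x = T q.2 x}) ⊆
      {q : (Fin k → ℕ) × (Fin k → ℕ) | ∀ x ∈ W, T q.1 x = T q.2 x} := by
  obtain ⟨x, hx⟩ := hdense
  -- commutation of the maps
  have hco : ∀ (p c : Fin k → ℕ) (y : X), T p (T c y) = T c (T p y) := by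
    intro p c y
    have h1 := congrFun (hTadd p c) y
    have h2 := congrFun (hTadd c p) y
    rw [add_comm] at h1
    exact h1.symm.trans h2
  -- pushing forward preserves relations
  have key : ∀ (c : Fin k → ℕ) (S : Set X) (p q : Fin k → ℕ),
      (∀ y ∈ S, T p y = T q y) → ∀ z ∈ T c '' S, T p z = T q z := by
    rintro c S p q h z ⟨y, hy, rfl⟩
    rw [hco p c, hco q c, h y hy]
  -- orbit points in U and V
  obtain ⟨u, ⟨m1, n1, h1⟩, huU⟩ := hx.exists_mem_open hU hUne
  obtain ⟨v, ⟨m2, n2, h2⟩, hvV⟩ := hx.exists_mem_open hV hVne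
  refine ⟨T m2 '' (T n1 '' U) ∩ T m1 '' (T n2 '' V), ?_, ?_, ?_⟩
  · exact (((hloc m2).isOpenMap) _ (((hloc n1).isOpenMap) _ hU)).inter
      (((hloc m1).isOpenMap) _ (((hloc n2).isOpenMap) _ hV))
  · refine ⟨T m2 (T n1 u), ⟨T n1 u, ⟨u, huU, rfl⟩, rfl⟩, ⟨T n2 v, ⟨v, hvV, rfl⟩, ?_⟩⟩
    rw [← h2, ← h1]
    exact (hco m2 m1 x).symm
  · rintro ⟨p, q⟩ (hpq | hpq) <;> intro w hw
    · exact key m2 _ p q (key n1 U p q hpq) w hw.1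
    · exact key m1 _ p q (key n2 V p q hpq) w hw.2
end

section
/- Let T be an ℕ^k-action by open maps on a space X with a dense orbit, and set Σ = ⋃{Σ_U : U ⊆ X open nonempty}. Then Σ is a submonoid of ℕ^k × ℕ^k and an equivalence relation on ℕ^k. -/
/-- If `T` is an `ℕ^k`-action by continuous open maps on a space `X` with a point of
dense orbit, then `Σ = ⋃ {Σ_U : U open nonempty}` is a submonoid of `ℕ^k × ℕ^k` and an
equivalence relation on `ℕ^k`. -/
theorem Sigma_submonoid_and_equivalence {k : ℕ} {X : Type*} [TopologicalSpace X]
    (T : (Fin k → ℕ) → X → X) (hT0 : T 0 = id)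
    (hTadd : ∀ m n, T (m + n) = T m ∘ T n)
    (hcont : ∀ m, Continuous (T m)) (hopen : ∀ m, IsOpenMap (T m))
    (hdense : ∃ x : X, Dense {y : X | ∃ m n : Fin k → ℕ, T m x = T n y}) :
    ((0, 0) ∈ {p : (Fin k → ℕ) × (Fin k → ℕ) |
        ∃ U : Set X, IsOpen U ∧ U.Nonempty ∧ ∀ x ∈ U, T p.1 x = T p.2 x} ∧
      ∀ p q : (Fin k → ℕ) × (Fin k → ℕ),
        p ∈ {p : (Fin k → ℕ) × (Fin k → ℕ) |
          ∃ U : Set X, IsOpen U ∧ U.Nonempty ∧ ∀ x ∈ U, T p.1 x = T p.2 x} →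
        q ∈ {p : (Fin k → ℕ) × (Fin k → ℕ) |
          ∃ U : Set X, IsOpen U ∧ U.Nonempty ∧ ∀ x ∈ U, T p.1 x = T p.2 x} →
        p + q ∈ {p : (Fin k → ℕ) × (Fin k → ℕ) |
          ∃ U : Set X, IsOpen U ∧ U.Nonempty ∧ ∀ x ∈ U, T p.1 x = T p.2 x}) ∧
    Equivalence (fun m n : Fin k → ℕ =>
      ∃ U : Set X, IsOpen U ∧ U.Nonempty ∧ ∀ x ∈ U, T m x = T n x) := by
  obtain ⟨x0, hx0⟩ := hdense
  have hcomm : ∀ (m n : Fin k → ℕ) (x : X), T m (T n x) = T n (T m x) := by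
    intro m n x
    have h1 : T (m + n) x = T m (T n x) := by rw [hTadd]; rfl
    have h2 : T (n + m) x = T n (T m x) := by rw [hTadd]; rfl
    rw [← h1, ← h2, add_comm]
  -- the relation propagates to forward images
  have hext : ∀ (p q : Fin k → ℕ) (U : Set X), (∀ x ∈ U, T p x = T q x) →
      ∀ (m : Fin k → ℕ), ∀ y ∈ T m '' U, T p y = T q y := by
    rintro p q U hU m y ⟨u, hu, rfl⟩
    calc T p (T m u) = T m (T p u) := hcomm p m u
      _ = T m (T q u) := by rw [hU u hu]
      _ = T q (T m u) := (hcomm q m u).symm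
  -- key lemma: forward images of two nonempty open sets meet
  have hkey : ∀ (U V : Set X), IsOpen U → U.Nonempty → IsOpen V → V.Nonempty →
      ∃ r s : Fin k → ℕ, ((T r '' U) ∩ (T s '' V)).Nonempty := by
    intro U V hUo hUne hVo hVne
    obtain ⟨y, ⟨a, b, hab⟩, hyU⟩ := hx0.exists_mem_open hUo hUne
    obtain ⟨z, ⟨c, d, hcd⟩, hzV⟩ := hx0.exists_mem_open hVo hVne
    refine ⟨c + b, a + d, T (c + b) y, ⟨y, hyU, rfl⟩, z, hzV, ?_⟩
    calc T (a + d) z = T a (T d z) := by rw [hTadd]; rfl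
      _ = T a (T c x0) := by rw [hcd]
      _ = T c (T a x0) := by rw [hcomm]
      _ = T c (T b y) := by rw [hab]
      _ = T (c + b) y := by rw [hTadd]; rfl
  have hXne : Nonempty X := ⟨x0⟩
  refine ⟨⟨⟨Set.univ, isOpen_univ, Set.univ_nonempty, fun x _ => rfl⟩, ?_⟩,
    ⟨fun m => ⟨Set.univ, isOpen_univ, Set.univ_nonempty, fun x _ => rfl⟩, ?_, ?_⟩⟩
  · -- closed under addition
    rintro p q ⟨U, hUo, hUne, hU⟩ ⟨V, hVo, hVne, hV⟩
    obtain ⟨r, s, w, ⟨⟨u, huU, hwu⟩, hw2⟩⟩ :=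
      hkey U (T q.1 '' V) hUo hUne (hopen q.1 V hVo) (hVne.image _)
    -- rewrite hw2 : w ∈ T s '' (T q.1 '' V)
    obtain ⟨v', ⟨v, hvV, rfl⟩, hwv⟩ := hw2
    refine ⟨(T s '' V) ∩ (T q.1) ⁻¹' (T r '' U),
      ((hopen s V hVo).inter ((hcont q.1).isOpen_preimage _ (hopen r U hUo))),
      ⟨T s v, ⟨v, hvV, rfl⟩, ?_⟩, ?_⟩
    · show T q.1 (T s v) ∈ T r '' U
      rw [hcomm, hwv]
      exact ⟨u, huU, hwu⟩
    · rintro x ⟨hx1, hx2⟩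
      have h1 : T q.1 x = T q.2 x := hext q.1 q.2 V hV s x hx1
      have h2 : T p.1 (T q.1 x) = T p.2 (T q.1 x) := hext p.1 p.2 U hU r _ hx2
      show T (p.1 + q.1) x = T (p.2 + q.2) x
      calc T (p.1 + q.1) x = T p.1 (T q.1 x) := by rw [hTadd]; rfl
        _ = T p.2 (T q.2 x) := by rw [h2, h1]
        _ = T (p.2 + q.2) x := by rw [hTadd]; rfl
  · -- symmetric
    rintro m n ⟨U, hUo, hUne, hU⟩
    exact ⟨U, hUo, hUne, fun x hx => (hU x hx).symm⟩
  · -- transitive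
    rintro a b c ⟨U, hUo, hUne, hU⟩ ⟨V, hVo, hVne, hV⟩
    obtain ⟨r, s, hW⟩ := hkey U V hUo hUne hVo hVne
    refine ⟨(T r '' U) ∩ (T s '' V), (hopen r U hUo).inter (hopen s V hVo), hW, ?_⟩
    rintro x ⟨hx1, hx2⟩
    rw [hext a b U hU r x hx1, hext b c V hV s x hx2]
end

section
/- Let T be an ℕ^k-action by open maps on a space X with a dense orbit, and Σ = ⋃{Σ_U : U open nonempty}. Then Σ = (Σ − Σ) ∩ (ℕ^k × ℕ^k); that is, if (m,n), (p,q) ∈ Σ with m − p ∈ ℕ^k and n − q ∈ ℕ^k, then (m−p, n−q) ∈ Σ. -/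
/-- If `T` is an `ℕ^k`-action by continuous open maps on `X` with a dense orbit, and
`Σ = ⋃ {Σ_U : U open nonempty}`, then `Σ = (Σ − Σ) ∩ (ℕ^k × ℕ^k)`: whenever
`(m,n), (p,q) ∈ Σ` with `p ≤ m` and `q ≤ n` (so that `m − p, n − q ∈ ℕ^k`), one has
`(m − p, n − q) ∈ Σ`. -/
theorem Sigma_diff_closed {k : ℕ} {X : Type*} [TopologicalSpace X]
    (T : (Fin k → ℕ) → X → X) (hT0 : T 0 = id)
    (hTadd : ∀ m n, T (m + n) = T m ∘ T n)
    (hcont : ∀ m, Continuous (T m)) (hopen : ∀ m, IsOpenMap (T m))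
    (hdense : ∃ x : X, Dense {y : X | ∃ m n : Fin k → ℕ, T m x = T n y})
    (m n p q : Fin k → ℕ)
    (hmn : ∃ U : Set X, IsOpen U ∧ U.Nonempty ∧ ∀ x ∈ U, T m x = T n x)
    (hpq : ∃ U : Set X, IsOpen U ∧ U.Nonempty ∧ ∀ x ∈ U, T p x = T q x)
    (hpm : p ≤ m) (hqn : q ≤ n) :
    ∃ U : Set X, IsOpen U ∧ U.Nonempty ∧ ∀ x ∈ U, T (m - p) x = T (n - q) x := by
  obtain ⟨U, hUo, hUne, hU⟩ := hmn
  obtain ⟨V, hVo, hVne, hV⟩ := hpq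
  obtain ⟨x, hx⟩ := hdense
  have comm : ∀ a c (u : X), T a (T c u) = T c (T a u) := by
    intro a c u
    rw [← Function.comp_apply (f := T a) (g := T c), ← hTadd, add_comm, hTadd,
      Function.comp_apply]
  have key : ∀ a b (s : Set X), (∀ x ∈ s, T a x = T b x) →
      ∀ c, ∀ y ∈ T c '' s, T a y = T b y := by
    rintro a b s hs c y ⟨u, hu, rfl⟩
    rw [comm a c u, comm b c u, hs u hu]
  obtain ⟨y, hyorb, hyU⟩ := hx.exists_mem_open hUo hUne
  obtain ⟨a, b, hab⟩ := hyorb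
  obtain ⟨z, hzorb, hzV⟩ := hx.exists_mem_open hVo hVne
  obtain ⟨c, d, hcd⟩ := hzorb
  have hw : T (b + c) y = T (a + d) z := by
    have h1 : T (b + c) y = T c (T b y) := by rw [add_comm, hTadd]; rfl
    have h2 : T (a + d) z = T a (T d z) := by rw [hTadd]; rfl
    rw [h1, ← hab, comm c a x, hcd, h2]
  refine ⟨T p '' (T (b + c) '' U ∩ T (a + d) '' V),
    (hopen p) _ ((hopen _ _ hUo).inter ((hopen _) _ hVo)),
    ⟨T p (T (b + c) y), Set.mem_image_of_mem _ ⟨⟨y, hyU, rfl⟩, ⟨z, hzV, hw.symm⟩⟩⟩, ?_⟩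
  rintro x' ⟨s, ⟨hsU, hsV⟩, rfl⟩
  have hmns : T m s = T n s := key m n U hU _ s hsU
  have hpqs : T p s = T q s := key p q V hV _ s hsV
  have e1 : T (m - p) (T p s) = T m s := by
    rw [← Function.comp_apply (f := T (m - p)), ← hTadd, tsub_add_cancel_of_le hpm]
  have e2 : T (n - q) (T q s) = T n s := by
    rw [← Function.comp_apply (f := T (n - q)), ← hTadd, tsub_add_cancel_of_le hqn]
  rw [e1, hmns, ← e2, hpqs]
end

section
/- Let T be an ℕ^k-action by open maps on X with a dense orbit, Σ = ⋃{Σ_U : U open nonempty}, and H(T) = {m − n : (m,n) ∈ Σ} ⊆ ℤ^k. Then Σ = {(m,n) ∈ ℕ^k × ℕ^k : m − n ∈ H(T)}. -/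
/-! If `T_p = T_q` on a nonempty open `U` and `m - n = p - q`, then `m + q = n + p`, so
`T_m ∘ T_q = T_{m+q} = T_{n+p} = T_n ∘ T_p` agrees with `T_n ∘ T_q` on `U`; that is,
`T_m = T_n` on `T_q '' U`, which is open because `T_q` is an open map. -/

open Set

theorem eqOn_image_of_add_eq_add {M X : Type*} [Add M] {T : M → X → X}
    (hTadd : ∀ m n, T (m + n) = T m ∘ T n) {U : Set X} {m n p q : M}
    (hU : EqOn (T p) (T q) U) (h : m + q = n + p) :
    EqOn (T m) (T n) (T q '' U) := by
  rintro _ ⟨w, hw, rfl⟩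
  calc T m (T q w) = T (m + q) w := by rw [hTadd]; rfl
    _ = T n (T p w) := by rw [h, hTadd]; rfl
    _ = T n (T q w) := by rw [hU hw]

theorem add_eq_add_of_intCast_sub_eq {ι : Type*} {m n p q : ι → ℕ}
    (h : (fun i => (m i : ℤ) - n i) = fun i => (p i : ℤ) - q i) : m + q = n + p := by
  funext i
  have := congrFun h i
  simp only [Pi.add_apply] at this ⊢
  omega

theorem Sigma_eq_diff_in_H_general {k : ℕ} {X : Type*} [TopologicalSpace X]
    (T : (Fin k → ℕ) → X → X)
    (hTadd : ∀ m n, T (m + n) = T m ∘ T n)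
    (hopen : ∀ m, IsOpenMap (T m)) :
    ∀ m n : Fin k → ℕ,
      (∃ U : Set X, IsOpen U ∧ U.Nonempty ∧ ∀ x ∈ U, T m x = T n x) ↔
      (fun i => (m i : ℤ) - n i) ∈
        {g : Fin k → ℤ | ∃ p q : Fin k → ℕ,
          (∃ U : Set X, IsOpen U ∧ U.Nonempty ∧ ∀ x ∈ U, T p x = T q x) ∧
          (fun i => (p i : ℤ) - q i) = g} := by
  intro m n
  refine ⟨fun h => ⟨m, n, h, rfl⟩, ?_⟩
  rintro ⟨p, q, ⟨U, hUopen, hUne, hUeq⟩, hpq⟩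
  exact ⟨T q '' U, hopen q U hUopen, hUne.image _,
    eqOn_image_of_add_eq_add hTadd hUeq (add_eq_add_of_intCast_sub_eq hpq.symm)⟩

/-- If `T` is an `ℕ^k`-action by continuous open maps on `X` with a dense orbit,
`Σ = ⋃ {Σ_U : U open nonempty}` and `H(T) = {m − n : (m,n) ∈ Σ} ⊆ ℤ^k`, then
`Σ = {(m,n) ∈ ℕ^k × ℕ^k : m − n ∈ H(T)}`. -/
theorem Sigma_eq_diff_in_H {k : ℕ} {X : Type*} [TopologicalSpace X]
    (T : (Fin k → ℕ) → X → X) (hT0 : T 0 = id)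
    (hTadd : ∀ m n, T (m + n) = T m ∘ T n)
    (hcont : ∀ m, Continuous (T m)) (hopen : ∀ m, IsOpenMap (T m))
    (hdense : ∃ x : X, Dense {y : X | ∃ m n : Fin k → ℕ, T m x = T n y}) :
    ∀ m n : Fin k → ℕ,
      (∃ U : Set X, IsOpen U ∧ U.Nonempty ∧ ∀ x ∈ U, T m x = T n x) ↔
      (fun i => (m i : ℤ) - n i) ∈
        {g : Fin k → ℤ | ∃ p q : Fin k → ℕ,
          (∃ U : Set X, IsOpen U ∧ U.Nonempty ∧ ∀ x ∈ U, T p x = T q x) ∧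
          (fun i => (p i : ℤ) - q i) = g} :=
  Sigma_eq_diff_in_H_general T hTadd hopen
end

section
/- Let T be an ℕ^k-action by open maps on X with a dense orbit and Σ, H(T) as above. Then H(T) = {m − n : (m,n) ∈ Σ} is a subgroup of ℤ^k. -/
/-- If `T` is an `ℕ^k`-action by continuous open maps on `X` with a dense orbit, then
`H(T) = {m − n : (m,n) ∈ Σ}` is a subgroup of `ℤ^k`: it contains `0` and is closed
under negation and addition. -/
theorem HT_subgroup {k : ℕ} {X : Type*} [TopologicalSpace X]
    (T : (Fin k → ℕ) → X → X) (hT0 : T 0 = id)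
    (hTadd : ∀ m n, T (m + n) = T m ∘ T n)
    (hcont : ∀ m, Continuous (T m)) (hopen : ∀ m, IsOpenMap (T m))
    (hdense : ∃ x : X, Dense {y : X | ∃ m n : Fin k → ℕ, T m x = T n y}) :
    ((0 : Fin k → ℤ) ∈
      {g : Fin k → ℤ | ∃ p q : Fin k → ℕ,
        (∃ U : Set X, IsOpen U ∧ U.Nonempty ∧ ∀ x ∈ U, T p x = T q x) ∧
        (fun i => (p i : ℤ) - q i) = g}) ∧
    (∀ g, g ∈ {g : Fin k → ℤ | ∃ p q : Fin k → ℕ,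
        (∃ U : Set X, IsOpen U ∧ U.Nonempty ∧ ∀ x ∈ U, T p x = T q x) ∧
        (fun i => (p i : ℤ) - q i) = g} →
      -g ∈ {g : Fin k → ℤ | ∃ p q : Fin k → ℕ,
        (∃ U : Set X, IsOpen U ∧ U.Nonempty ∧ ∀ x ∈ U, T p x = T q x) ∧
        (fun i => (p i : ℤ) - q i) = g}) ∧
    (∀ g h, g ∈ {g : Fin k → ℤ | ∃ p q : Fin k → ℕ,
        (∃ U : Set X, IsOpen U ∧ U.Nonempty ∧ ∀ x ∈ U, T p x = T q x) ∧
        (fun i => (p i : ℤ) - q i) = g} →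
      h ∈ {g : Fin k → ℤ | ∃ p q : Fin k → ℕ,
        (∃ U : Set X, IsOpen U ∧ U.Nonempty ∧ ∀ x ∈ U, T p x = T q x) ∧
        (fun i => (p i : ℤ) - q i) = g} →
      g + h ∈ {g : Fin k → ℤ | ∃ p q : Fin k → ℕ,
        (∃ U : Set X, IsOpen U ∧ U.Nonempty ∧ ∀ x ∈ U, T p x = T q x) ∧
        (fun i => (p i : ℤ) - q i) = g}) := by
  obtain ⟨x, hx⟩ := hdense
  -- a helper: equality T p = T q propagates along forward images
  have push : ∀ (p q r : Fin k → ℕ) (u : X), T p u = T q u →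
      T p (T r u) = T q (T r u) := by
    intro p q r u hu
    have h1 : T p (T r u) = T r (T p u) := by
      have := congrFun (hTadd p r) u
      have h2 := congrFun (hTadd r p) u
      simp only [Function.comp] at this h2
      rw [← this, add_comm, h2]
    have h3 : T q (T r u) = T r (T q u) := by
      have := congrFun (hTadd q r) u
      have h2 := congrFun (hTadd r q) u
      simp only [Function.comp] at this h2
      rw [← this, add_comm, h2]
    rw [h1, h3, hu]
  refine ⟨⟨0, 0, ⟨Set.univ, isOpen_univ, ⟨x, Set.mem_univ x⟩, fun _ _ => rfl⟩, by
      funext i; simp⟩, ?_, ?_⟩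
  · rintro g ⟨p, q, ⟨U, hU, hUne, hpq⟩, rfl⟩
    exact ⟨q, p, ⟨U, hU, hUne, fun y hy => (hpq y hy).symm⟩, by funext i; simp⟩
  · rintro g h ⟨p, q, ⟨U, hU, hUne, hpq⟩, rfl⟩ ⟨p', q', ⟨V, hV, hVne, hpq'⟩, rfl⟩
    obtain ⟨y, ⟨m, n, hmn⟩, hyU⟩ := hx.exists_mem_open hU hUne
    obtain ⟨y', ⟨m', n', hmn'⟩, hyV⟩ := hx.exists_mem_open hV hVne
    have key : T (m' + n) y = T (m + n') y' := by
      have e1 := congrFun (hTadd m' n) y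
      have e2 := congrFun (hTadd m' m) x
      have e3 := congrFun (hTadd m m') x
      have e4 := congrFun (hTadd m n') y'
      simp only [Function.comp] at e1 e2 e3 e4
      rw [e1, ← hmn, ← e2, add_comm m' m, e3, hmn', ← e4]
    refine ⟨p + p', q + q', ⟨(T (m' + n) '' U) ∩ (T (m + n') '' V),
      (hopen _ U hU).inter (hopen _ V hV),
      ⟨T (m' + n) y, ⟨y, hyU, rfl⟩, ⟨y', hyV, key.symm⟩⟩,
      ?_⟩, ?_⟩
    · rintro z ⟨⟨u, huU, rfl⟩, hz2⟩
      obtain ⟨v, hvV, hv⟩ := hz2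
      have h1 : T p (T (m' + n) u) = T q (T (m' + n) u) := push p q _ u (hpq u huU)
      have h2 : T p' (T (m' + n) u) = T q' (T (m' + n) u) := by
        rw [← hv]; exact push p' q' _ v (hpq' v hvV)
      have c1 := congrFun (hTadd p p') (T (m' + n) u)
      have c2 := congrFun (hTadd q q') (T (m' + n) u)
      simp only [Function.comp] at c1 c2
      rw [c1, c2, h2]
      exact push p q q' _ h1
    · funext i
      simp only [Pi.add_apply]
      push_cast
      ring
end

section
/- Let T be an ℕ^k-action by open maps on X with a dense orbit. Suppose Y ⊆ X is a nonempty subset with Σ_Y = Σ. If x, y ∈ Y, g ∈ ℤ^k, and T^p x = T^q y for some p, q ∈ ℕ^k with g = p − q, then for every n ∈ H(T) there exist p', q' ∈ ℕ^k with p' − q' = g + n and T^{p'} x = T^{q'} y. -/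
/-- Let `T` be an `ℕ^k`-action by continuous open maps on `X` with a dense orbit, and
let `Y ⊆ X` be a nonempty subset with `Σ_Y = Σ`. If `x, y ∈ Y` and `T^p x = T^q y`,
then for every `n ∈ H(T)` there are `p', q' ∈ ℕ^k` with `p' − q' = (p − q) + n` and
`T^{p'} x = T^{q'} y`. -/
theorem Ht_shift {k : ℕ} {X : Type*} [TopologicalSpace X]
    (T : (Fin k → ℕ) → X → X) (hT0 : T 0 = id)
    (hTadd : ∀ m n, T (m + n) = T m ∘ T n)
    (hcont : ∀ m, Continuous (T m)) (hopen : ∀ m, IsOpenMap (T m))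
    (hdense : ∃ x : X, Dense {y : X | ∃ m n : Fin k → ℕ, T m x = T n y})
    (Y : Set X) (hYne : Y.Nonempty)
    (hSigmaY : {p : (Fin k → ℕ) × (Fin k → ℕ) | ∀ z ∈ Y, T p.1 z = T p.2 z} =
      {p : (Fin k → ℕ) × (Fin k → ℕ) |
        ∃ U : Set X, IsOpen U ∧ U.Nonempty ∧ ∀ z ∈ U, T p.1 z = T p.2 z})
    (x y : X) (hx : x ∈ Y) (hy : y ∈ Y)
    (p q : Fin k → ℕ) (hpq : T p x = T q y)
    (n : Fin k → ℤ)
    (hn : n ∈ {g : Fin k → ℤ | ∃ a b : Fin k → ℕ,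
      (∃ U : Set X, IsOpen U ∧ U.Nonempty ∧ ∀ z ∈ U, T a z = T b z) ∧
      (fun i => (a i : ℤ) - b i) = g}) :
    ∃ p' q' : Fin k → ℕ,
      (fun i => (p' i : ℤ) - q' i) = (fun i => ((p i : ℤ) - q i) + n i) ∧
      T p' x = T q' y := by
  obtain ⟨a, b, hU, hab⟩ := hn
  have habY : ∀ z ∈ Y, T a z = T b z := by
    have : (a, b) ∈ {p : (Fin k → ℕ) × (Fin k → ℕ) | ∀ z ∈ Y, T p.1 z = T p.2 z} := by
      rw [hSigmaY]; exact hU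
    exact this
  refine ⟨p + a, q + b, ?_, ?_⟩
  · funext i
    have := congrFun hab i
    simp only [Pi.add_apply]
    push_cast
    omega
  · have h1 : T (p + a) x = T (a + q) y := by
      rw [add_comm p a, hTadd, hTadd]
      simp [hpq]
    have h2 : T (a + q) y = T (q + b) y := by
      rw [add_comm a q, hTadd, hTadd]
      simp [habY y hy]
    rw [h1, h2]
end

section
/- Let T be an ℕ^k-action by local homeomorphisms on a locally compact Hausdorff space X with a dense orbit, and suppose for every nonempty open U ⊆ X one has Σ_U = Σ. Then the interior of the isotropy of the Deaconu–Renault groupoid G_T equals {(x, g, x) : x ∈ X, g ∈ H(T)}, where H(T) = {m − n : (m,n) ∈ Σ}. -/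
/-!
The sets `Z(U,m,n,V)` form a basis of the topology: two of them through a common point have the
same degree `m₁ - n₁ = m₂ - n₂`, so after shifting both to a common pair `(m, n)` and shrinking
`U`, `V` so that the extra iterate is injective there, their intersection is again basic.
If a basic set `Z(U,m,n,V)` lies in the isotropy, then `T^m = T^n` on the nonempty open set
`U ∩ T^{-m}(T^n V)`, so `(m, n) ∈ Σ`. Conversely, `Σ_X = Σ` makes `T^p = T^q` on all of `X` for
`(p, q) ∈ Σ`, and then `Z(W,p,q,W)` lies in the isotropy as soon as `T^q` is injective on `W`.
-/

/-- The difference `m − n ∈ ℤ^k` of `m, n ∈ ℕ^k`. -/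
def zdiff {k : ℕ} (m n : Fin k → ℕ) : Fin k → ℤ := fun i => (m i : ℤ) - n i

/-- The Deaconu–Renault groupoid of an `ℕ^k`-action `T`, as a subset of
`X × ℤ^k × X`. -/
def DRGroupoid {k : ℕ} {X : Type*} (T : (Fin k → ℕ) → X → X) :
    Set (X × (Fin k → ℤ) × X) :=
  {t | ∃ m n : Fin k → ℕ, zdiff m n = t.2.1 ∧ T m t.1 = T n t.2.2}

/-- The basic set `Z(U,m,n,V)` of the Deaconu–Renault groupoid. -/
def ZSet {k : ℕ} {X : Type*} (T : (Fin k → ℕ) → X → X)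
    (U V : Set X) (m n : Fin k → ℕ) : Set (DRGroupoid T) :=
  {γ | γ.val.1 ∈ U ∧ γ.val.2.2 ∈ V ∧ γ.val.2.1 = zdiff m n ∧ T m γ.val.1 = T n γ.val.2.2}

/-- The topology on the Deaconu–Renault groupoid generated by the sets
`Z(U,m,n,V)` with `U, V` open. -/
def DRTopology {k : ℕ} {X : Type*} [TopologicalSpace X]
    (T : (Fin k → ℕ) → X → X) : TopologicalSpace (DRGroupoid T) :=
  TopologicalSpace.generateFrom
    {Z | ∃ U V : Set X, ∃ m n : Fin k → ℕ, IsOpen U ∧ IsOpen V ∧ Z = ZSet T U V m n}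

lemma zdiff_add_left {k : ℕ} (d m n : Fin k → ℕ) : zdiff (d + m) (d + n) = zdiff m n := by
  funext i
  simp only [zdiff, Pi.add_apply, Nat.cast_add]
  ring

lemma add_eq_add_of_zdiff_eq {k : ℕ} {m₁ n₁ m₂ n₂ : Fin k → ℕ}
    (h : zdiff m₁ n₁ = zdiff m₂ n₂) : m₂ + n₁ = m₁ + n₂ := by
  funext i
  have hi := congrFun h i
  simp only [zdiff] at hi
  simp only [Pi.add_apply]
  omega

section ZSet

variable {k : ℕ} {X : Type*} (T : (Fin k → ℕ) → X → X)

lemma ZSet_inter (U₁ V₁ U₂ V₂ : Set X) (m n : Fin k → ℕ) :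
    ZSet T (U₁ ∩ U₂) (V₁ ∩ V₂) m n = ZSet T U₁ V₁ m n ∩ ZSet T U₂ V₂ m n := by
  ext γ
  constructor
  · rintro ⟨⟨hx₁, hx₂⟩, ⟨hz₁, hz₂⟩, hg, hT⟩
    exact ⟨⟨hx₁, hz₁, hg, hT⟩, hx₂, hz₂, hg, hT⟩
  · rintro ⟨⟨hx₁, hz₁, hg, hT⟩, hx₂, hz₂, -⟩
    exact ⟨⟨hx₁, hx₂⟩, ⟨hz₁, hz₂⟩, hg, hT⟩

lemma ZSet_shift_subset (hTadd : ∀ m n, T (m + n) = T m ∘ T n) {W : Set X} {d : Fin k → ℕ}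
    (hinj : Set.InjOn (T d) W) (U V : Set X) (m n : Fin k → ℕ) :
    ZSet T (U ∩ T m ⁻¹' W) (V ∩ T n ⁻¹' W) (d + m) (d + n) ⊆ ZSet T U V m n := by
  rintro γ ⟨⟨hxU, hxW⟩, ⟨hzV, hzW⟩, hg, hT⟩
  rw [hTadd, hTadd] at hT
  exact ⟨hxU, hzV, hg.trans (zdiff_add_left d m n), hinj hxW hzW hT⟩

lemma mem_ZSet_shift (hTadd : ∀ m n, T (m + n) = T m ∘ T n) {W : Set X} (d : Fin k → ℕ)
    {U V : Set X} {m n : Fin k → ℕ} {γ : DRGroupoid T} (hγ : γ ∈ ZSet T U V m n)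
    (hW : T m γ.val.1 ∈ W) :
    γ ∈ ZSet T (U ∩ T m ⁻¹' W) (V ∩ T n ⁻¹' W) (d + m) (d + n) := by
  obtain ⟨hxU, hzV, hg, hT⟩ := hγ
  refine ⟨⟨hxU, hW⟩, ⟨hzV, ?_⟩, hg.trans (zdiff_add_left d m n).symm, ?_⟩
  · rwa [Set.mem_preimage, ← hT]
  · rw [hTadd, hTadd, Function.comp_apply, Function.comp_apply, hT]

lemma ZSet_subset_isotropy_of_injOn {W : Set X} {p q : Fin k → ℕ} (hpq : T p = T q)
    (hinj : Set.InjOn (T q) W) : ZSet T W W p q ⊆ {γ | γ.val.1 = γ.val.2.2} := by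
  rintro γ ⟨hx, hz, -, hT⟩
  exact hinj hx hz (hpq ▸ hT)

variable [TopologicalSpace X]

lemma exists_ZSet_shift_subset (hTadd : ∀ m n, T (m + n) = T m ∘ T n)
    (hloc : ∀ m, IsLocalHomeomorph (T m)) {U V : Set X} (hU : IsOpen U) (hV : IsOpen V)
    {m n : Fin k → ℕ} {γ : DRGroupoid T} (hγ : γ ∈ ZSet T U V m n) (d : Fin k → ℕ) :
    ∃ U' V' : Set X, IsOpen U' ∧ IsOpen V' ∧
      γ ∈ ZSet T U' V' (d + m) (d + n) ∧ ZSet T U' V' (d + m) (d + n) ⊆ ZSet T U V m n := by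
  obtain ⟨e, hxe, hTe⟩ := hloc d (T m γ.val.1)
  have hinj : Set.InjOn (T d) e.source := hTe ▸ e.injOn
  exact ⟨_, _, hU.inter (e.open_source.preimage (hloc m).continuous),
    hV.inter (e.open_source.preimage (hloc n).continuous),
    mem_ZSet_shift T hTadd d hγ hxe, ZSet_shift_subset T hTadd hinj U V m n⟩

lemma isOpen_ZSet {U V : Set X} (hU : IsOpen U) (hV : IsOpen V) (m n : Fin k → ℕ) :
    @IsOpen _ (DRTopology T) (ZSet T U V m n) :=
  TopologicalSpace.isOpen_generateFrom_of_mem ⟨U, V, m, n, hU, hV, rfl⟩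

theorem isTopologicalBasis_ZSet (hTadd : ∀ m n, T (m + n) = T m ∘ T n)
    (hloc : ∀ m, IsLocalHomeomorph (T m)) :
    TopologicalSpace.IsTopologicalBasis (t := DRTopology T)
      {Z | ∃ U V : Set X, ∃ m n : Fin k → ℕ, IsOpen U ∧ IsOpen V ∧ Z = ZSet T U V m n} := by
  refine @TopologicalSpace.IsTopologicalBasis.mk _ (DRTopology T) _ ?_ ?_ rfl
  · rintro _ ⟨U₁, V₁, m₁, n₁, hU₁, hV₁, rfl⟩ _ ⟨U₂, V₂, m₂, n₂, hU₂, hV₂, rfl⟩ γ ⟨hγ₁, hγ₂⟩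
    have hn : m₂ + n₁ = m₁ + n₂ := add_eq_add_of_zdiff_eq (hγ₁.2.2.1.symm.trans hγ₂.2.2.1)
    obtain ⟨U₁', V₁', hU₁', hV₁', hγ₁', hsub₁⟩ :=
      exists_ZSet_shift_subset T hTadd hloc hU₁ hV₁ hγ₁ m₂
    obtain ⟨U₂', V₂', hU₂', hV₂', hγ₂', hsub₂⟩ :=
      exists_ZSet_shift_subset T hTadd hloc hU₂ hV₂ hγ₂ m₁
    -- both refinements now have the pair `(m₁ + m₂, m₁ + n₂)`
    rw [add_comm m₂ m₁, hn] at hγ₁' hsub₁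
    refine ⟨ZSet T (U₁' ∩ U₂') (V₁' ∩ V₂') (m₁ + m₂) (m₁ + n₂),
      ⟨_, _, _, _, hU₁'.inter hU₂', hV₁'.inter hV₂', rfl⟩, ?_⟩
    rw [ZSet_inter]
    exact ⟨⟨hγ₁', hγ₂'⟩, Set.inter_subset_inter hsub₁ hsub₂⟩
  · refine Set.eq_univ_of_forall fun γ => ?_
    obtain ⟨m, n, hg, hT⟩ := γ.property
    exact ⟨_, ⟨Set.univ, Set.univ, m, n, isOpen_univ, isOpen_univ, rfl⟩,
      trivial, trivial, hg.symm, hT⟩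

lemma exists_eqOn_of_ZSet_subset_isotropy {U V : Set X} (hU : IsOpen U) (hV : IsOpen V)
    {m n : Fin k → ℕ} (hm : Continuous (T m)) (hn : IsOpenMap (T n))
    (hsub : ZSet T U V m n ⊆ {γ | γ.val.1 = γ.val.2.2}) (hne : (ZSet T U V m n).Nonempty) :
    ∃ W : Set X, IsOpen W ∧ W.Nonempty ∧ Set.EqOn (T m) (T n) W := by
  obtain ⟨γ, hxU, hzV, -, hT⟩ := hne
  refine ⟨U ∩ T m ⁻¹' (T n '' V), hU.inter ((hn V hV).preimage hm),
    ⟨γ.val.1, hxU, γ.val.2.2, hzV, hT.symm⟩, ?_⟩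
  rintro y ⟨hyU, w, hwV, hw⟩
  have hyw : y = w := @hsub ⟨(y, zdiff m n, w), m, n, rfl, hw.symm⟩ ⟨hyU, hwV, rfl, hw.symm⟩
  rw [← hw, hyw]

end ZSet

theorem interior_isotropy_of_DR_general {k : ℕ} {X : Type*} [TopologicalSpace X]
    (T : (Fin k → ℕ) → X → X)
    (hTadd : ∀ m n, T (m + n) = T m ∘ T n)
    (hloc : ∀ m, IsLocalHomeomorph (T m))
    (hSigma : ∀ U : Set X, IsOpen U → U.Nonempty →
      {p : (Fin k → ℕ) × (Fin k → ℕ) | ∀ y ∈ U, T p.1 y = T p.2 y} =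
      {p : (Fin k → ℕ) × (Fin k → ℕ) |
        ∃ V : Set X, IsOpen V ∧ V.Nonempty ∧ ∀ y ∈ V, T p.1 y = T p.2 y}) :
    @interior _ (DRTopology T) {γ : DRGroupoid T | γ.val.1 = γ.val.2.2} =
    {γ : DRGroupoid T | γ.val.1 = γ.val.2.2 ∧
      ∃ p q : Fin k → ℕ,
        (∃ V : Set X, IsOpen V ∧ V.Nonempty ∧ ∀ y ∈ V, T p y = T q y) ∧
        zdiff p q = γ.val.2.1} := by
  let := DRTopology T
  ext γ
  constructor
  · intro hγ
    have hiso : γ ∈ {γ : DRGroupoid T | γ.val.1 = γ.val.2.2} := interior_subset hγ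
    obtain ⟨_, ⟨U, V, m, n, hU, hV, rfl⟩, hγZ, hsub⟩ :=
      (isTopologicalBasis_ZSet T hTadd hloc).mem_nhds_iff.mp (mem_interior_iff_mem_nhds.mp hγ)
    exact ⟨hiso, m, n, exists_eqOn_of_ZSet_subset_isotropy T hU hV
      (hloc m).continuous (hloc n).isOpenMap hsub ⟨γ, hγZ⟩, hγZ.2.2.1.symm⟩
  · rintro ⟨hiso, p, q, hpq, hg⟩
    have hglobal : T p = T q := by
      have hpq_univ : (p, q) ∈
          {p : (Fin k → ℕ) × (Fin k → ℕ) | ∀ y ∈ Set.univ, T p.1 y = T p.2 y} := by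
        rw [hSigma Set.univ isOpen_univ ⟨γ.val.1, trivial⟩]
        exact hpq
      exact funext fun y => hpq_univ y trivial
    obtain ⟨e, hxe, hTe⟩ := hloc q γ.val.1
    have hγZ : γ ∈ ZSet T e.source e.source p q :=
      ⟨hxe, hiso ▸ hxe, hg.symm, by rw [hglobal, hiso]⟩
    exact mem_interior.mpr ⟨_, ZSet_subset_isotropy_of_injOn T hglobal (hTe ▸ e.injOn),
      isOpen_ZSet T e.open_source e.open_source p q, hγZ⟩

/-- If `T` is an `ℕ^k`-action by local homeomorphisms on a locally compact Hausdorff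
space `X` with a dense orbit, and `Σ_U = Σ` for every nonempty open `U`, then the
interior of the isotropy of `G_T` is `{(x,g,x) : x ∈ X, g ∈ H(T)}`. -/
theorem interior_isotropy_of_DR {k : ℕ} {X : Type*} [TopologicalSpace X]
    [LocallyCompactSpace X] [T2Space X]
    (T : (Fin k → ℕ) → X → X) (hT0 : T 0 = id)
    (hTadd : ∀ m n, T (m + n) = T m ∘ T n)
    (hloc : ∀ m, IsLocalHomeomorph (T m))
    (hdense : ∃ x : X, Dense {y : X | ∃ m n : Fin k → ℕ, T m x = T n y})
    (hSigma : ∀ U : Set X, IsOpen U → U.Nonempty →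
      {p : (Fin k → ℕ) × (Fin k → ℕ) | ∀ y ∈ U, T p.1 y = T p.2 y} =
      {p : (Fin k → ℕ) × (Fin k → ℕ) |
        ∃ V : Set X, IsOpen V ∧ V.Nonempty ∧ ∀ y ∈ V, T p.1 y = T p.2 y}) :
    @interior _ (DRTopology T) {γ : DRGroupoid T | γ.val.1 = γ.val.2.2} =
    {γ : DRGroupoid T | γ.val.1 = γ.val.2.2 ∧
      ∃ p q : Fin k → ℕ,
        (∃ V : Set X, IsOpen V ∧ V.Nonempty ∧ ∀ y ∈ V, T p y = T q y) ∧
        zdiff p q = γ.val.2.1} :=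
  interior_isotropy_of_DR_general T hTadd hloc hSigma
end

section
/- Let T be an ℕ^k-action by local homeomorphisms on a locally compact Hausdorff space X. The sets Z(U,m,n,V) = {(x, m−n, y) : x ∈ U, y ∈ V, T^m x = T^n y}, for U, V ⊆ X open and m, n ∈ ℕ^k, form a basis for a topology on the Deaconu–Renault groupoid G_T = ⋃_{m,n} {(x, m−n, y) : T^m x = T^n y}. -/
/-- For an `ℕ^k`-action by local homeomorphisms on a locally compact Hausdorff space,
the sets `Z(U,m,n,V)` (for `U, V` open, `m, n ∈ ℕ^k`) form a basis for a topology on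
`G_T`: they cover `G_T`, and any point of an intersection of two basic sets lies in a
basic set contained in the intersection. -/
theorem ZSets_form_basis {k : ℕ} {X : Type*} [TopologicalSpace X]
    [LocallyCompactSpace X] [T2Space X]
    (T : (Fin k → ℕ) → X → X) (hT0 : T 0 = id)
    (hTadd : ∀ m n, T (m + n) = T m ∘ T n)
    (hloc : ∀ m, IsLocalHomeomorph (T m)) :
    (∀ γ : DRGroupoid T, ∃ U V : Set X, ∃ m n : Fin k → ℕ,
      IsOpen U ∧ IsOpen V ∧ γ ∈ ZSet T U V m n) ∧
    (∀ (U₁ V₁ U₂ V₂ : Set X) (m₁ n₁ m₂ n₂ : Fin k → ℕ),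
      IsOpen U₁ → IsOpen V₁ → IsOpen U₂ → IsOpen V₂ →
      ∀ γ ∈ ZSet T U₁ V₁ m₁ n₁ ∩ ZSet T U₂ V₂ m₂ n₂,
        ∃ U V : Set X, ∃ m n : Fin k → ℕ, IsOpen U ∧ IsOpen V ∧
          γ ∈ ZSet T U V m n ∧
          ZSet T U V m n ⊆ ZSet T U₁ V₁ m₁ n₁ ∩ ZSet T U₂ V₂ m₂ n₂) := by
  constructor
  · rintro ⟨⟨x, g, y⟩, m, n, hg, hTeq⟩
    exact ⟨Set.univ, Set.univ, m, n, isOpen_univ, isOpen_univ,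
      trivial, trivial, hg.symm, hTeq⟩
  · rintro U₁ V₁ U₂ V₂ m₁ n₁ m₂ n₂ hU₁ hV₁ hU₂ hV₂ γ
      ⟨⟨hx₁, hy₁, hg₁, hT₁⟩, ⟨hx₂, hy₂, hg₂, hT₂⟩⟩
    set x₀ := γ.val.1 with hx₀
    set y₀ := γ.val.2.2 with hy₀
    have hzd : ∀ i, (m₁ i : ℤ) - n₁ i = (m₂ i : ℤ) - n₂ i := fun i => by
      have := congrFun (hg₁.symm.trans hg₂) i
      simpa [zdiff] using this
    set m : Fin k → ℕ := fun i => max (m₁ i) (m₂ i) with hm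
    set c : Fin k → ℕ := fun i => m i - m₁ i with hc
    set d : Fin k → ℕ := fun i => m i - m₂ i with hd
    set n : Fin k → ℕ := c + n₁ with hn
    have hcm : c + m₁ = m := by
      funext i; simp only [Pi.add_apply, hc, hm]; omega
    have hdm : d + m₂ = m := by
      funext i; simp only [Pi.add_apply, hd, hm]; omega
    have hdn : d + n₂ = n := by
      funext i
      simp only [Pi.add_apply, hn, hd, hc, hm]
      have := hzd i; omega
    have hTm : T m = T c ∘ T m₁ := by rw [← hcm, hTadd]
    have hTn : T n = T c ∘ T n₁ := by rw [hn, hTadd]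
    have hTm' : T m = T d ∘ T m₂ := by rw [← hdm, hTadd]
    have hTn' : T n = T d ∘ T n₂ := by rw [← hdn, hTadd]
    have hzmn : zdiff m n = zdiff m₁ n₁ := by
      funext i
      simp only [zdiff, hn, Pi.add_apply, hc, hm]
      omega
    have hzmn' : zdiff m n = zdiff m₂ n₂ := by
      rw [hzmn, ← hg₁, hg₂]
    obtain ⟨e₁, hmem₁, he₁⟩ := hloc c (T m₁ x₀)
    obtain ⟨e₂, hmem₂, he₂⟩ := hloc d (T m₂ x₀)
    refine ⟨U₁ ∩ U₂ ∩ (T m₁ ⁻¹' e₁.source) ∩ (T m₂ ⁻¹' e₂.source),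
      V₁ ∩ V₂ ∩ (T n₁ ⁻¹' e₁.source) ∩ (T n₂ ⁻¹' e₂.source), m, n, ?_, ?_, ?_, ?_⟩
    · exact (((hU₁.inter hU₂).inter
        (e₁.open_source.preimage (hloc m₁).continuous)).inter
        (e₂.open_source.preimage (hloc m₂).continuous))
    · exact (((hV₁.inter hV₂).inter
        (e₁.open_source.preimage (hloc n₁).continuous)).inter
        (e₂.open_source.preimage (hloc n₂).continuous))
    · refine ⟨⟨⟨⟨hx₁, hx₂⟩, hmem₁⟩, hmem₂⟩,
        ⟨⟨⟨hy₁, hy₂⟩, ?_⟩, ?_⟩, by rw [hg₁, hzmn], ?_⟩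
      · show T n₁ y₀ ∈ e₁.source; rwa [← hT₁]
      · show T n₂ y₀ ∈ e₂.source; rwa [← hT₂]
      · rw [hTm, hTn, Function.comp_apply, Function.comp_apply, hT₁]
    · rintro ⟨⟨x, g, y⟩, hγ'⟩
        ⟨⟨⟨⟨hxU₁, hxU₂⟩, hxe₁⟩, hxe₂⟩, ⟨⟨⟨hyV₁, hyV₂⟩, hye₁⟩, hye₂⟩, hgz, hTeq⟩
      have h1 : T m₁ x = T n₁ y := by
        apply e₁.injOn hxe₁ hye₁
        have : T c (T m₁ x) = T c (T n₁ y) := by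
          have := hTeq
          rw [hTm, hTn] at this
          exact this
        rwa [he₁] at this
      have h2 : T m₂ x = T n₂ y := by
        apply e₂.injOn hxe₂ hye₂
        have : T d (T m₂ x) = T d (T n₂ y) := by
          have := hTeq
          rw [hTm', hTn'] at this
          exact this
        rwa [he₂] at this
      exact ⟨⟨hxU₁, hyV₁, by rw [hgz, hzmn], h1⟩,
             ⟨hxU₂, hyV₂, by rw [hgz, hzmn'], h2⟩⟩
end

section
/- Let T be an ℕ^k-action by local homeomorphisms on a locally compact Hausdorff space X with a dense orbit, and let Y(x) denote, for x ∈ X, the maximal relatively open subset Y of the closure of [x] with Σ(x)_Y = Σ(x) (where Σ(x) is defined using relatively open subsets of closure([x])). Then for x, y ∈ X, Y(x) = Y(y) if and only if closure([x]) = closure([y]). -/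
/-- The orbit `[x]` of a point under an `ℕ^k`-action. -/
def orbitDR {k : ℕ} {X : Type*} (T : (Fin k → ℕ) → X → X) (x : X) : Set X :=
  {y | ∃ m n : Fin k → ℕ, T m x = T n y}

/-- `Σ(x)`: pairs `(m,n)` such that `T^m = T^n` on some nonempty relatively open
subset of the orbit closure of `x`. -/
def SigmaOf {k : ℕ} {X : Type*} [TopologicalSpace X]
    (T : (Fin k → ℕ) → X → X) (x : X) : Set ((Fin k → ℕ) × (Fin k → ℕ)) :=
  {p | ∃ U : Set X, (∃ V : Set X, IsOpen V ∧ U = V ∩ closure (orbitDR T x)) ∧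
    U.Nonempty ∧ ∀ z ∈ U, T p.1 z = T p.2 z}

/-- `Y(x)`: the union of all relatively open subsets `Y` of the orbit closure of `x`
with `Σ(x)_Y = Σ(x)`; it is the maximal such set. -/
def Ymax {k : ℕ} {X : Type*} [TopologicalSpace X]
    (T : (Fin k → ℕ) → X → X) (x : X) : Set X :=
  ⋃₀ {U : Set X | (∃ V : Set X, IsOpen V ∧ U = V ∩ closure (orbitDR T x)) ∧
    {p : (Fin k → ℕ) × (Fin k → ℕ) | ∀ z ∈ U, T p.1 z = T p.2 z} = SigmaOf T x}

/-!
Near a point `z` of the orbit `[x]` (relative to `[x]`), the relations `T^m = T^n` that hold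
only grow when `z` is moved forward along the orbit, because the `T^s` are open maps; any two
points of `[x]` have a common forward image; and `T^d` can be cancelled from
`T^(a+d) = T^(b+d)` near a point where `T^a` and `T^b` agree, because `T^d` is locally injective.
Consequently `Σ(x)` is closed under subtracting a smaller pair, so by Dickson's lemma it is
generated as a monoid by finitely many of its elements. These all hold near a single orbit point
`z`, hence so does all of `Σ(x)`, and `z ∈ Y(x)`. If `Y(x) = Y(y)`, then `z ∈ closure [y]`, and
orbit closures are invariant, so `closure [x] ⊆ closure [y]`. Conversely, `Y(x)` only depends on
`closure [x]`.
-/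

open Filter Topology Set

theorem exists_finset_subset_addSubmonoidClosure_of_tsub_mem {A : Type*} [AddCommMonoid A]
    [PartialOrder A] [CanonicallyOrderedAdd A] [Sub A] [OrderedSub A] [IsCancelAdd A]
    [WellQuasiOrderedLE A] (S : Set A) (hS : ∀ a ∈ S, ∀ b ∈ S, b ≤ a → a - b ∈ S) :
    ∃ F : Finset A, ↑F ⊆ S ∧ S ⊆ AddSubmonoid.closure (F : Set A) := by
  have hfin : {a | Minimal (fun a => a ∈ S ∧ a ≠ 0) a}.Finite :=
    WellQuasiOrderedLE.finite_of_isAntichain (setOfPred_minimal_antichain _)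
  refine ⟨hfin.toFinset, fun a ha => (hfin.mem_toFinset.1 ha).1.1, fun a ha => ?_⟩
  induction a using WellFoundedLT.induction with
  | _ a ih =>
    rcases eq_or_ne a 0 with rfl | ha0
    · exact zero_mem _
    obtain ⟨b, hba, hb⟩ := exists_minimal_le_of_wellFoundedLT (fun a => a ∈ S ∧ a ≠ 0) a ⟨ha, ha0⟩
    have hdecomp : b + (a - b) = a := add_tsub_cancel_of_le hba
    have hlt : a - b < a := tsub_le_self.lt_of_ne fun h => hb.1.2 <| by
      rw [h] at hdecomp
      exact add_eq_right.mp hdecomp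
    rw [← hdecomp]
    exact add_mem (AddSubmonoid.subset_closure (hfin.mem_toFinset.2 hb))
      (ih _ hlt (hS a ha b hb.1.1 hba))

theorem IsLocallyInjective.eventually_eq_of_comp {X Y Z : Type*} [TopologicalSpace X]
    [TopologicalSpace Y] {f : Y → Z} (hf : IsLocallyInjective f) {g h : X → Y} {z : X}
    (hg : ContinuousAt g z) (hh : ContinuousAt h z) (hz : g z = h z) {l : Filter X}
    (hl : l ≤ 𝓝 z) (hfgh : ∀ᶠ w in l, f (g w) = f (h w)) : ∀ᶠ w in l, g w = h w := by
  obtain ⟨U, hU, hzU, hinj⟩ := hf (g z)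
  have hgU : ∀ᶠ w in 𝓝 z, g w ∈ U := hg (hU.mem_nhds hzU)
  have hhU : ∀ᶠ w in 𝓝 z, h w ∈ U := hh (hU.mem_nhds (hz ▸ hzU))
  filter_upwards [hl (hgU.and hhU), hfgh] with w ⟨hgw, hhw⟩ heq using hinj hgw hhw heq

theorem IsClosed.exists_isOpen_inter_closure_subset {X : Type*} [TopologicalSpace X]
    {E s : Set X} {z : X} (hE : IsClosed E) (h : E ∈ 𝓝[s] z) :
    ∃ V, IsOpen V ∧ z ∈ V ∧ V ∩ closure s ⊆ E := by
  obtain ⟨V, hV, hzV, hVs⟩ := mem_nhdsWithin.1 h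
  exact ⟨V, hV, hzV, hV.inter_closure.trans (closure_minimal hVs hE)⟩

section Action

variable {k : ℕ} {X : Type*} {T : (Fin k → ℕ) → X → X}

theorem apply_apply (hTadd : ∀ m n, T (m + n) = T m ∘ T n) (m n : Fin k → ℕ) (z : X) :
    T m (T n z) = T (m + n) z :=
  (congrFun (hTadd m n) z).symm

theorem apply_apply_comm (hTadd : ∀ m n, T (m + n) = T m ∘ T n) (m n : Fin k → ℕ) (z : X) :
    T m (T n z) = T n (T m z) := by
  rw [apply_apply hTadd, apply_apply hTadd, add_comm]

theorem apply_eq_apply_apply (hTadd : ∀ m n, T (m + n) = T m ∘ T n) {m n : Fin k → ℕ} {w : X}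
    (h : T m w = T n w) (s : Fin k → ℕ) : T m (T s w) = T n (T s w) := by
  rw [apply_apply_comm hTadd m, apply_apply_comm hTadd n, h]

def eqPairsAt (hTadd : ∀ m n, T (m + n) = T m ∘ T n) (w : X) :
    AddSubmonoid ((Fin k → ℕ) × (Fin k → ℕ)) where
  carrier := {p | T p.1 w = T p.2 w}
  zero_mem' := rfl
  add_mem' {p q} hp hq := by
    change T p.1 w = T p.2 w at hp
    change T q.1 w = T q.2 w at hq
    change T (p.1 + q.1) w = T (p.2 + q.2) w
    rw [← apply_apply hTadd, hq, apply_apply_comm hTadd, hp, apply_apply hTadd, add_comm]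

theorem mem_orbitDR_self (x : X) : x ∈ orbitDR T x := ⟨0, 0, rfl⟩

theorem orbitDR_symm {x y : X} (h : y ∈ orbitDR T x) : x ∈ orbitDR T y :=
  let ⟨m, n, hmn⟩ := h
  ⟨n, m, hmn.symm⟩

theorem orbitDR_trans (hTadd : ∀ m n, T (m + n) = T m ∘ T n) {x y z : X}
    (hy : y ∈ orbitDR T x) (hz : z ∈ orbitDR T y) : z ∈ orbitDR T x := by
  obtain ⟨m, n, hmn⟩ := hy
  obtain ⟨p, q, hpq⟩ := hz
  refine ⟨p + m, n + q, ?_⟩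
  rw [← apply_apply hTadd, hmn, apply_apply_comm hTadd, hpq, apply_apply hTadd]

theorem apply_mem_orbitDR_iff (hTadd : ∀ m n, T (m + n) = T m ∘ T n) {x y : X}
    (s : Fin k → ℕ) : T s y ∈ orbitDR T x ↔ y ∈ orbitDR T x := by
  have hzero : T 0 (T s y) = T s y := by rw [apply_apply hTadd, zero_add]
  exact ⟨fun h => orbitDR_trans hTadd h ⟨0, s, hzero⟩,
    fun h => orbitDR_trans hTadd h ⟨s, 0, hzero.symm⟩⟩

variable [TopologicalSpace X]

theorem mem_closure_orbitDR_of_apply_eq (hTadd : ∀ m n, T (m + n) = T m ∘ T n)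
    (hloc : ∀ m, IsLocalHomeomorph (T m)) {y z w : X} {a b : Fin k → ℕ}
    (hz : z ∈ closure (orbitDR T y)) (h : T a z = T b w) : w ∈ closure (orbitDR T y) := by
  rw [mem_closure_iff_nhds] at hz ⊢
  intro N hN
  have himage : T b '' N ∈ 𝓝 (T a z) := h ▸ (hloc b).isOpenMap.image_mem_nhds hN
  obtain ⟨v, ⟨n, hnN, hnv⟩, hvy⟩ := hz _ ((hloc a).continuous.continuousAt.preimage_mem_nhds himage)
  exact ⟨n, hnN, orbitDR_trans hTadd hvy ⟨a, b, hnv.symm⟩⟩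

theorem closure_orbitDR_subset (hTadd : ∀ m n, T (m + n) = T m ∘ T n)
    (hloc : ∀ m, IsLocalHomeomorph (T m)) {y z : X} (hz : z ∈ closure (orbitDR T y)) :
    closure (orbitDR T z) ⊆ closure (orbitDR T y) :=
  closure_minimal (fun _ ⟨_, _, h⟩ => mem_closure_orbitDR_of_apply_eq hTadd hloc hz h)
    isClosed_closure

theorem nhdsWithin_orbitDR_apply_le_map (hTadd : ∀ m n, T (m + n) = T m ∘ T n)
    (hloc : ∀ m, IsLocalHomeomorph (T m)) (x z : X) (s : Fin k → ℕ) :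
    𝓝[orbitDR T x] (T s z) ≤ map (T s) (𝓝[orbitDR T x] z) := by
  have hpre : T s ⁻¹' orbitDR T x = orbitDR T x := ext fun _ => apply_mem_orbitDR_iff hTadd s
  calc 𝓝[orbitDR T x] (T s z) ≤ map (T s) (𝓝 z) ⊓ 𝓟 (orbitDR T x) :=
        inf_le_inf_right _ ((hloc s).isOpenMap.nhds_le z)
    _ = map (T s) (𝓝[orbitDR T x] z) := by
        rw [← map_inf_principal_preimage, hpre, nhdsWithin]

theorem Filter.Eventually.nhdsWithin_orbitDR_apply (hTadd : ∀ m n, T (m + n) = T m ∘ T n)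
    (hloc : ∀ m, IsLocalHomeomorph (T m)) {x z : X} {P : X → Prop} (s : Fin k → ℕ)
    (hP : ∀ u, P u → P (T s u)) (h : ∀ᶠ w in 𝓝[orbitDR T x] z, P w) :
    ∀ᶠ w in 𝓝[orbitDR T x] (T s z), P w :=
  nhdsWithin_orbitDR_apply_le_map hTadd hloc x z s (h.mono hP)

theorem exists_mem_orbitDR_eventually_and (hTadd : ∀ m n, T (m + n) = T m ∘ T n)
    (hloc : ∀ m, IsLocalHomeomorph (T m)) {x z₁ z₂ : X} {P Q : X → Prop}
    (hP : ∀ s u, P u → P (T s u)) (hQ : ∀ s u, Q u → Q (T s u))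
    (hz₁ : z₁ ∈ orbitDR T x) (hz₂ : z₂ ∈ orbitDR T x)
    (h₁ : ∀ᶠ w in 𝓝[orbitDR T x] z₁, P w) (h₂ : ∀ᶠ w in 𝓝[orbitDR T x] z₂, Q w) :
    ∃ z ∈ orbitDR T x, ∀ᶠ w in 𝓝[orbitDR T x] z, P w ∧ Q w := by
  obtain ⟨a, b, hab⟩ := orbitDR_trans hTadd (orbitDR_symm hz₁) hz₂
  refine ⟨T a z₁, (apply_mem_orbitDR_iff hTadd a).2 hz₁, ?_⟩
  refine (h₁.nhdsWithin_orbitDR_apply hTadd hloc a (hP a)).and ?_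
  exact hab ▸ h₂.nhdsWithin_orbitDR_apply hTadd hloc b (hQ b)

theorem exists_mem_orbitDR_eventually_forall_finset (hTadd : ∀ m n, T (m + n) = T m ∘ T n)
    (hloc : ∀ m, IsLocalHomeomorph (T m)) (x : X) (F : Finset ((Fin k → ℕ) × (Fin k → ℕ)))
    (hF : ∀ p ∈ F, ∃ z ∈ orbitDR T x, ∀ᶠ w in 𝓝[orbitDR T x] z, T p.1 w = T p.2 w) :
    ∃ z ∈ orbitDR T x, ∀ᶠ w in 𝓝[orbitDR T x] z, ∀ p ∈ F, T p.1 w = T p.2 w := by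
  classical
  induction F using Finset.induction_on with
  | empty => exact ⟨x, mem_orbitDR_self x, by simp⟩
  | insert p F _ ih =>
    obtain ⟨z₁, hz₁, h₁⟩ := hF p (Finset.mem_insert_self p F)
    obtain ⟨z₂, hz₂, h₂⟩ := ih fun q hq => hF q (Finset.mem_insert_of_mem hq)
    obtain ⟨z, hz, h⟩ := exists_mem_orbitDR_eventually_and hTadd hloc
      (P := fun w => T p.1 w = T p.2 w) (Q := fun w => ∀ q ∈ F, T q.1 w = T q.2 w)
      (fun s u hu => apply_eq_apply_apply hTadd hu s)
      (fun s u hu q hq => apply_eq_apply_apply hTadd (hu q hq) s) hz₁ hz₂ h₁ h₂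
    exact ⟨z, hz, h.mono fun w hw => Finset.forall_mem_insert _ _ _ |>.2 hw⟩

theorem eventually_apply_eq_of_add_right (hTadd : ∀ m n, T (m + n) = T m ∘ T n)
    (hloc : ∀ m, IsLocalHomeomorph (T m)) {x u : X} (hu : u ∈ orbitDR T x) {a b d : Fin k → ℕ}
    (h : ∀ᶠ w in 𝓝[orbitDR T x] u, T (a + d) w = T (b + d) w) :
    ∀ᶠ w in 𝓝[orbitDR T x] (T (a + d) u), T a w = T b w := by
  have hnear : ∀ᶠ w in 𝓝[orbitDR T x] (T (a + d) u), T d (T a w) = T d (T b w) := by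
    refine (h.nhdsWithin_orbitDR_apply (P := fun w => T (a + d) w = T (b + d) w) hTadd hloc
      (a + d) fun w hw => apply_eq_apply_apply hTadd hw _).mono fun w hw => ?_
    rwa [apply_apply hTadd, apply_apply hTadd, add_comm d, add_comm d]
  have hpt : T a (T (a + d) u) = T b (T (a + d) u) :=
    calc T a (T (a + d) u) = T a (T (b + d) u) := by rw [h.self_of_nhdsWithin hu]
      _ = T b (T (a + d) u) := by rw [apply_apply hTadd, apply_apply hTadd, add_left_comm]
  exact (hloc d).isLocallyInjective.eventually_eq_of_comp (hloc a).continuous.continuousAt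
    (hloc b).continuous.continuousAt hpt nhdsWithin_le_nhds hnear

theorem Ymax_subset_closure (x : X) : Ymax T x ⊆ closure (orbitDR T x) := by
  rintro z ⟨_, ⟨⟨V, _, rfl⟩, _⟩, hz⟩
  exact hz.2

variable [T2Space X]

theorem isClosed_setOf_forall_apply_eq (hloc : ∀ m, IsLocalHomeomorph (T m))
    (P : Set ((Fin k → ℕ) × (Fin k → ℕ))) : IsClosed {w | ∀ p ∈ P, T p.1 w = T p.2 w} := by
  simp only [ofPred_forall]
  exact isClosed_biInter fun p _ => isClosed_eq (hloc p.1).continuous (hloc p.2).continuous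

theorem mem_SigmaOf_iff (hloc : ∀ m, IsLocalHomeomorph (T m)) {x : X}
    {p : (Fin k → ℕ) × (Fin k → ℕ)} :
    p ∈ SigmaOf T x ↔ ∃ z ∈ orbitDR T x, ∀ᶠ w in 𝓝[orbitDR T x] z, T p.1 w = T p.2 w := by
  constructor
  · rintro ⟨_, ⟨V, hV, rfl⟩, ⟨w, hwV, hw⟩, hrel⟩
    obtain ⟨z, hzV, hz⟩ := mem_closure_iff.1 hw V hV hwV
    exact ⟨z, hz, mem_nhdsWithin.2 ⟨V, hV, hzV, fun v hv => hrel v ⟨hv.1, subset_closure hv.2⟩⟩⟩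
  · rintro ⟨z, hz, h⟩
    obtain ⟨V, hV, hzV, hVE⟩ := (isClosed_eq (hloc p.1).continuous
      (hloc p.2).continuous).exists_isOpen_inter_closure_subset h
    exact ⟨_, ⟨V, hV, rfl⟩, ⟨z, hzV, subset_closure hz⟩, fun w hw => hVE hw⟩

theorem tsub_mem_SigmaOf (hTadd : ∀ m n, T (m + n) = T m ∘ T n)
    (hloc : ∀ m, IsLocalHomeomorph (T m)) {x : X} {p q : (Fin k → ℕ) × (Fin k → ℕ)}
    (hp : p ∈ SigmaOf T x) (hq : q ∈ SigmaOf T x) (hqp : q ≤ p) : p - q ∈ SigmaOf T x := by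
  obtain ⟨z₁, hz₁, h₁⟩ := (mem_SigmaOf_iff hloc).1 hp
  obtain ⟨z₂, hz₂, h₂⟩ := (mem_SigmaOf_iff hloc).1 hq
  obtain ⟨z, hz, h⟩ := exists_mem_orbitDR_eventually_and hTadd hloc
    (P := fun w => T p.1 w = T p.2 w) (Q := fun w => T q.1 w = T q.2 w)
    (fun s u hu => apply_eq_apply_apply hTadd hu s) (fun s u hu => apply_eq_apply_apply hTadd hu s)
    hz₁ hz₂ h₁ h₂
  have hshift : ∀ᶠ w in 𝓝[orbitDR T x] z,
      T ((p - q).1 + q.2) w = T ((p - q).2 + q.2) w := by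
    refine h.mono fun w ⟨hpw, hqw⟩ => ?_
    rw [← apply_apply hTadd, ← hqw, apply_apply hTadd, Prod.fst_sub, Prod.snd_sub,
      tsub_add_cancel_of_le hqp.1, tsub_add_cancel_of_le hqp.2, hpw]
  exact (mem_SigmaOf_iff hloc).2 ⟨_, (apply_mem_orbitDR_iff hTadd _).2 hz,
    eventually_apply_eq_of_add_right hTadd hloc hz hshift⟩

theorem exists_mem_orbitDR_eventually_forall_mem_SigmaOf (hTadd : ∀ m n, T (m + n) = T m ∘ T n)
    (hloc : ∀ m, IsLocalHomeomorph (T m)) (x : X) :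
    ∃ z ∈ orbitDR T x, ∀ᶠ w in 𝓝[orbitDR T x] z, ∀ p ∈ SigmaOf T x, T p.1 w = T p.2 w := by
  obtain ⟨F, hFS, hSF⟩ := exists_finset_subset_addSubmonoidClosure_of_tsub_mem (SigmaOf T x)
    fun p hp q hq => tsub_mem_SigmaOf hTadd hloc hp hq
  obtain ⟨z, hz, hF⟩ := exists_mem_orbitDR_eventually_forall_finset hTadd hloc x F
    fun p hp => (mem_SigmaOf_iff hloc).1 (hFS hp)
  exact ⟨z, hz, hF.mono fun w hw p hp =>
    AddSubmonoid.closure_le (S := eqPairsAt hTadd w) |>.2 hw (hSF hp)⟩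

theorem exists_mem_orbitDR_mem_Ymax (hTadd : ∀ m n, T (m + n) = T m ∘ T n)
    (hloc : ∀ m, IsLocalHomeomorph (T m)) (x : X) : ∃ z ∈ orbitDR T x, z ∈ Ymax T x := by
  obtain ⟨z, hz, h⟩ := exists_mem_orbitDR_eventually_forall_mem_SigmaOf hTadd hloc x
  obtain ⟨V, hV, hzV, hVE⟩ :=
    (isClosed_setOf_forall_apply_eq hloc (SigmaOf T x)).exists_isOpen_inter_closure_subset h
  refine ⟨z, hz, V ∩ closure (orbitDR T x), ⟨⟨V, hV, rfl⟩, ?_⟩, hzV, subset_closure hz⟩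
  ext p
  exact ⟨fun hp => ⟨_, ⟨V, hV, rfl⟩, ⟨z, hzV, subset_closure hz⟩, hp⟩,
    fun hp w hw => hVE hw p hp⟩

theorem closure_orbitDR_subset_of_Ymax_subset (hTadd : ∀ m n, T (m + n) = T m ∘ T n)
    (hloc : ∀ m, IsLocalHomeomorph (T m)) {x y : X} (h : Ymax T x ⊆ Ymax T y) :
    closure (orbitDR T x) ⊆ closure (orbitDR T y) := by
  obtain ⟨z, hz, hzY⟩ := exists_mem_orbitDR_mem_Ymax hTadd hloc x
  calc closure (orbitDR T x) ⊆ closure (orbitDR T z) :=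
        closure_orbitDR_subset hTadd hloc (subset_closure (orbitDR_symm hz))
    _ ⊆ closure (orbitDR T y) :=
        closure_orbitDR_subset hTadd hloc (Ymax_subset_closure y (h hzY))

end Action

theorem Ymax_eq_iff_orbit_closure_eq_general {k : ℕ} {X : Type*} [TopologicalSpace X]
    [T2Space X]
    (T : (Fin k → ℕ) → X → X)
    (hTadd : ∀ m n, T (m + n) = T m ∘ T n)
    (hloc : ∀ m, IsLocalHomeomorph (T m)) :
    ∀ x y : X, Ymax T x = Ymax T y ↔ closure (orbitDR T x) = closure (orbitDR T y) := by
  intro x y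
  refine ⟨fun h => ?_, fun h => by simp only [Ymax, SigmaOf, h]⟩
  exact (closure_orbitDR_subset_of_Ymax_subset hTadd hloc h.le).antisymm
    (closure_orbitDR_subset_of_Ymax_subset hTadd hloc h.ge)

/-- For an `ℕ^k`-action by local homeomorphisms on a locally compact Hausdorff space
with a dense orbit: `Y(x) = Y(y)` if and only if the orbit closures of `x` and `y`
coincide. -/
theorem Ymax_eq_iff_orbit_closure_eq {k : ℕ} {X : Type*} [TopologicalSpace X]
    [LocallyCompactSpace X] [T2Space X]
    (T : (Fin k → ℕ) → X → X) (hT0 : T 0 = id)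
    (hTadd : ∀ m n, T (m + n) = T m ∘ T n)
    (hloc : ∀ m, IsLocalHomeomorph (T m))
    (hdense : ∃ x : X, Dense (orbitDR T x)) :
    ∀ x y : X, Ymax T x = Ymax T y ↔ closure (orbitDR T x) = closure (orbitDR T y) :=
  Ymax_eq_iff_orbit_closure_eq_general T hTadd hloc
end

section
/- Let T be an ℕ^k-action by local homeomorphisms on a locally compact Hausdorff space X with dense orbit, suppose Σ_U = Σ for every nonempty open U, and let Y ⊆ X be open with T^p Y ⊆ Y for all p ∈ ℕ^k. Then for every (m,n) ∈ ℕ^k × ℕ^k with m − n ∈ H(T) and every x ∈ Y, T^m x = T^n x. -/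
/-! Since `Σ_Y = Σ`, the pair `(a, b)` witnessing `m - n ∈ H(T)` already satisfies `T^a = T^b`
on all of `Y`. From `a + n = b + m` and the invariance of `Y` one gets `T^m = T^n` on the open set
`T^b Y`, so `(m, n) ∈ Σ`, and `Σ_Y = Σ` once more gives `T^m = T^n` on `Y`. -/

open Set

theorem add_eq_add_of_natCast_sub_eq {ι : Type*} {a b m n : ι → ℕ}
    (h : (fun i => (a i : ℤ) - b i) = fun i => (m i : ℤ) - n i) : a + n = b + m := by
  funext i
  have hi := congrFun h i
  simp only [Pi.add_apply]
  omega

theorem eqOn_image_of_add_eq_add_s19 {M α : Type*} [AddCommMonoid M] {T : M → α → α}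
    (hTadd : ∀ m n, T (m + n) = T m ∘ T n) {a b m n : M} (habmn : a + n = b + m)
    {Y : Set α} (hab : EqOn (T a) (T b) Y) (hn : MapsTo (T n) Y Y) :
    EqOn (T m) (T n) (T b '' Y) := by
  rintro _ ⟨y, hy, rfl⟩
  calc T m (T b y) = T (a + n) y := by rw [habmn, add_comm, hTadd]; rfl
    _ = T b (T n y) := by rw [hTadd]; exact hab (hn hy)
    _ = T n (T b y) := by rw [← Function.comp_apply (f := T b), ← hTadd, add_comm, hTadd]; rfl

theorem TmTn_eq_of_diff_mem_HT_general {k : ℕ} {X : Type*} [TopologicalSpace X]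
    (T : (Fin k → ℕ) → X → X)
    (hTadd : ∀ m n, T (m + n) = T m ∘ T n)
    (hloc : ∀ m, IsLocalHomeomorph (T m))
    (hSigma : ∀ U : Set X, IsOpen U → U.Nonempty →
      {p : (Fin k → ℕ) × (Fin k → ℕ) | ∀ y ∈ U, T p.1 y = T p.2 y} =
      {p : (Fin k → ℕ) × (Fin k → ℕ) |
        ∃ V : Set X, IsOpen V ∧ V.Nonempty ∧ ∀ y ∈ V, T p.1 y = T p.2 y})
    (Y : Set X) (hY : IsOpen Y) (hYinv : ∀ p : Fin k → ℕ, T p '' Y ⊆ Y) :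
    ∀ m n : Fin k → ℕ,
      (fun i => (m i : ℤ) - n i) ∈
        {g : Fin k → ℤ | ∃ a b : Fin k → ℕ,
          (∃ V : Set X, IsOpen V ∧ V.Nonempty ∧ ∀ y ∈ V, T a y = T b y) ∧
          (fun i => (a i : ℤ) - b i) = g} →
      ∀ x ∈ Y, T m x = T n x := by
  rintro m n ⟨a, b, hab_somewhere, hab⟩ x hx
  have sigma_Y : ∀ p : (Fin k → ℕ) × (Fin k → ℕ),
      (∃ V : Set X, IsOpen V ∧ V.Nonempty ∧ ∀ y ∈ V, T p.1 y = T p.2 y) →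
      EqOn (T p.1) (T p.2) Y :=
    fun p hp => (Set.ext_iff.mp (hSigma Y hY ⟨x, hx⟩) p).mpr hp
  have hmn_image : EqOn (T m) (T n) (T b '' Y) :=
    eqOn_image_of_add_eq_add_s19 hTadd (add_eq_add_of_natCast_sub_eq hab)
      (sigma_Y (a, b) hab_somewhere) (mapsTo_iff_image_subset.mpr (hYinv n))
  exact sigma_Y (m, n) ⟨T b '' Y, (hloc b).isOpenMap Y hY, ⟨T b x, x, hx, rfl⟩, hmn_image⟩ hx

/-- Let `T` be an `ℕ^k`-action by local homeomorphisms on a locally compact Hausdorff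
space `X` with a dense orbit such that `Σ_U = Σ` for every nonempty open `U`, and let
`Y ⊆ X` be open with `T^p Y ⊆ Y` for all `p`. Then for every `(m,n)` with
`m − n ∈ H(T)` and every `x ∈ Y`, `T^m x = T^n x`. -/
theorem TmTn_eq_of_diff_mem_HT {k : ℕ} {X : Type*} [TopologicalSpace X]
    [LocallyCompactSpace X] [T2Space X]
    (T : (Fin k → ℕ) → X → X) (hT0 : T 0 = id)
    (hTadd : ∀ m n, T (m + n) = T m ∘ T n)
    (hloc : ∀ m, IsLocalHomeomorph (T m))
    (hdense : ∃ x : X, Dense {y : X | ∃ m n : Fin k → ℕ, T m x = T n y})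
    (hSigma : ∀ U : Set X, IsOpen U → U.Nonempty →
      {p : (Fin k → ℕ) × (Fin k → ℕ) | ∀ y ∈ U, T p.1 y = T p.2 y} =
      {p : (Fin k → ℕ) × (Fin k → ℕ) |
        ∃ V : Set X, IsOpen V ∧ V.Nonempty ∧ ∀ y ∈ V, T p.1 y = T p.2 y})
    (Y : Set X) (hY : IsOpen Y) (hYinv : ∀ p : Fin k → ℕ, T p '' Y ⊆ Y) :
    ∀ m n : Fin k → ℕ,
      (fun i => (m i : ℤ) - n i) ∈
        {g : Fin k → ℤ | ∃ a b : Fin k → ℕ,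
          (∃ V : Set X, IsOpen V ∧ V.Nonempty ∧ ∀ y ∈ V, T a y = T b y) ∧
          (fun i => (a i : ℤ) - b i) = g} →
      ∀ x ∈ Y, T m x = T n x :=
  TmTn_eq_of_diff_mem_HT_general T hTadd hloc hSigma Y hY hYinv
end
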